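/- arXiv:1809.01128 — 2 statements merged into one kernel-verified Lean document; each statement's English description precedes it below -/
import Mathlib

section
/- Let G1 and G2 be connected simple graphs on disjoint vertex sets with |V(Gi)| ≥ 2 and mi = |E(Gi)| ≥ 1 for i = 1,2, and let u1 ∈ V(G1), u2 ∈ V(G2). Let G be the connected graph obtained by identifying u1 with u2 into a single vertex u (so E(G) is the disjoint union of E(G1) and E(G2)). Then W_e(G) = W_e(G1) + W_e(G2) + m1·Σ_{f ∈ E(G2)} d_G(f,u) + m2·Σ_{g ∈ E(G1)} d_G(g,u) + m1·m2. -/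
open SimpleGraph Finset
open scoped Classical

/-- The distance `d_G(f,g)` between two edges: `0` if they coincide, otherwise the minimum
distance between endpoints plus one (i.e. the distance in the line graph). -/
noncomputable def eDist {V : Type*} (G : SimpleGraph V) (e f : Sym2 V) : ℕ :=
  if e = f then 0 else sInf {n : ℕ | ∃ u ∈ e, ∃ w ∈ f, G.dist u w = n} + 1

/-- The distance `d_G(v,f)` between a vertex and an edge: the minimum distance to an endpoint. -/
noncomputable def vDist {V : Type*} (G : SimpleGraph V) (v : V) (e : Sym2 V) : ℕ :=
  sInf {n : ℕ | ∃ u ∈ e, G.dist v u = n}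

/-- The edge-Wiener index `W_e(G)`: the sum of `eDist` over unordered pairs of edges. -/
noncomputable def edgeWiener {V : Type*} [Fintype V] (G : SimpleGraph V) : ℕ :=
  (∑ e ∈ G.edgeFinset, ∑ f ∈ G.edgeFinset, eDist G e f) / 2

/-- The vertex of `V1 ⊕ {y : V2 // y ≠ u2}` corresponding to `x : V2` after identifying
`u2` with `u1`. -/
noncomputable def glueVert {V1 V2 : Type*} (u1 : V1) (u2 : V2) (x : V2) :
    V1 ⊕ {y : V2 // y ≠ u2} :=
  if h : x = u2 then Sum.inl u1 else Sum.inr ⟨x, h⟩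

/-- The graph obtained from disjoint graphs `G1`, `G2` by identifying `u1 ∈ V(G1)` with
`u2 ∈ V(G2)` into a single vertex (namely `Sum.inl u1`). -/
noncomputable def joinAt {V1 V2 : Type*} (G1 : SimpleGraph V1) (G2 : SimpleGraph V2)
    (u1 : V1) (u2 : V2) : SimpleGraph (V1 ⊕ {y : V2 // y ≠ u2}) :=
  SimpleGraph.fromRel (fun a b =>
    (∃ x y, G1.Adj x y ∧ a = Sum.inl x ∧ b = Sum.inl y) ∨
    (∃ x y, G2.Adj x y ∧ a = glueVert u1 u2 x ∧ b = glueVert u1 u2 y))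

/-! The glued graph embeds in the box product `G1 □ G2` as `V1 × {u2} ∪ {u1} × V2`, and the
embedding is isometric: within a side distances are those of `Gi`, and between the sides every
path runs through the cut vertex `u`. So edge distances inside `E(G1)` and inside `E(G2)` are
unchanged, while `d(g, f) = d(g, u) + d(f, u) + 1` for `g ∈ E(G1)`, `f ∈ E(G2)`; summing over the
four blocks of pairs of edges gives the formula. -/

namespace SimpleGraph

variable {V W : Type*} {G : SimpleGraph V} {H : SimpleGraph W}

theorem Hom.dist_map_le (f : G →g H) {u v : V} (h : G.Reachable u v) :
    H.dist (f u) (f v) ≤ G.dist u v := by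
  obtain ⟨p, hp⟩ := h.exists_walk_length_eq_dist
  rw [← hp, ← p.length_map f]
  exact dist_le _

theorem dist_boxProd_of_reachable {x y : V × W} (hG : G.Reachable x.1 y.1)
    (hH : H.Reachable x.2 y.2) : (G □ H).dist x y = G.dist x.1 y.1 + H.dist x.2 y.2 := by
  have hGH : (G □ H).Reachable x y := reachable_boxProd.2 ⟨hG, hH⟩
  rw [← Nat.cast_inj (R := ℕ∞), Nat.cast_add, hGH.coe_dist_eq_edist, hG.coe_dist_eq_edist,
    hH.coe_dist_eq_edist, edist_boxProd]

end SimpleGraph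

section EdgeDistance

variable {V W : Type*} {G : SimpleGraph V} {H : SimpleGraph W}

theorem eDist_self (e : Sym2 V) : eDist G e e = 0 := if_pos rfl

theorem eDist_comm (e f : Sym2 V) : eDist G e f = eDist G f e := by
  by_cases h : e = f
  · rw [h]
  · simp only [eDist, if_neg h, if_neg (Ne.symm h)]
    congr 2
    ext n
    constructor <;> exact fun ⟨u, hu, w, hw, huw⟩ => ⟨w, hw, u, hu, dist_comm.trans huw⟩

theorem vDist_mk (v x y : V) : vDist G v s(x, y) = min (G.dist v x) (G.dist v y) := by
  have hx : G.dist v x ∈ {n | ∃ u ∈ s(x, y), G.dist v u = n} := ⟨x, Sym2.mem_mk_left x y, rfl⟩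
  have hy : G.dist v y ∈ {n | ∃ u ∈ s(x, y), G.dist v u = n} := ⟨y, Sym2.mem_mk_right x y, rfl⟩
  obtain ⟨u, hu, hmin⟩ := Nat.sInf_mem ⟨_, hx⟩
  have := Nat.sInf_le hx
  have := Nat.sInf_le hy
  rw [vDist]
  rcases Sym2.mem_iff.mp hu with rfl | rfl <;> omega

theorem eDist_mk_of_ne {x y a b : V} (hne : s(x, y) ≠ s(a, b)) :
    eDist G s(x, y) s(a, b)
      = min (min (G.dist x a) (G.dist x b)) (min (G.dist y a) (G.dist y b)) + 1 := by
  rw [eDist, if_neg hne]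
  set S := {n | ∃ u ∈ s(x, y), ∃ w ∈ s(a, b), G.dist u w = n}
  have hxa : G.dist x a ∈ S := ⟨x, Sym2.mem_mk_left x y, a, Sym2.mem_mk_left a b, rfl⟩
  have hxb : G.dist x b ∈ S := ⟨x, Sym2.mem_mk_left x y, b, Sym2.mem_mk_right a b, rfl⟩
  have hya : G.dist y a ∈ S := ⟨y, Sym2.mem_mk_right x y, a, Sym2.mem_mk_left a b, rfl⟩
  have hyb : G.dist y b ∈ S := ⟨y, Sym2.mem_mk_right x y, b, Sym2.mem_mk_right a b, rfl⟩
  obtain ⟨u, hu, w, hw, hmin⟩ := Nat.sInf_mem ⟨_, hxa⟩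
  have := Nat.sInf_le hxa
  have := Nat.sInf_le hxb
  have := Nat.sInf_le hya
  have := Nat.sInf_le hyb
  rcases Sym2.mem_iff.mp hu with rfl | rfl <;> rcases Sym2.mem_iff.mp hw with rfl | rfl <;> omega

theorem eDist_map {f : V → W} (hf : Function.Injective f)
    (hdist : ∀ x y, H.dist (f x) (f y) = G.dist x y) (e e' : Sym2 V) :
    eDist H (e.map f) (e'.map f) = eDist G e e' := by
  by_cases h : e = e'
  · rw [h, eDist_self, eDist_self]
  · simp only [eDist, if_neg h, if_neg ((Sym2.map.injective hf).ne h), Sym2.mem_map]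
    simp [hdist]

theorem eDist_eq_vDist_add_vDist_add_one {e f : Sym2 V} (hne : e ≠ f) (w : V)
    (hcut : ∀ u ∈ e, ∀ v ∈ f, G.dist u v = G.dist w u + G.dist w v) :
    eDist G e f = vDist G w e + vDist G w f + 1 := by
  induction e using Sym2.ind with | _ x y =>
  induction f using Sym2.ind with | _ a b =>
  rw [eDist_mk_of_ne hne, vDist_mk, vDist_mk]
  simp only [Sym2.mem_iff, forall_eq_or_imp, forall_eq] at hcut
  omega

end EdgeDistance

section DoubleSums

variable {α β : Type*}

theorem even_sum_sum_of_symm (s : Finset α) (d : α → α → ℕ) (hsymm : ∀ a b, d a b = d b a)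
    (hdiag : ∀ a, d a a = 0) : Even (∑ e ∈ s, ∑ f ∈ s, d e f) := by
  classical
  induction s using Finset.induction_on with
  | empty => simp
  | @insert a t ha ih =>
    obtain ⟨k, hk⟩ := ih
    have hcol : ∑ e ∈ t, d e a = ∑ e ∈ t, d a e := Finset.sum_congr rfl fun e _ => hsymm e a
    simp only [Finset.sum_insert ha, Finset.sum_add_distrib, hdiag]
    exact ⟨∑ f ∈ t, d a f + k, by omega⟩

theorem sum_sum_union_of_symm [DecidableEq α] {s t : Finset α} (hst : Disjoint s t)
    (d : α → α → ℕ) (hsymm : ∀ a b, d a b = d b a) :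
    ∑ e ∈ s ∪ t, ∑ f ∈ s ∪ t, d e f
      = ∑ e ∈ s, ∑ f ∈ s, d e f + ∑ e ∈ t, ∑ f ∈ t, d e f + 2 * ∑ e ∈ s, ∑ f ∈ t, d e f := by
  have hts : ∑ e ∈ t, ∑ f ∈ s, d e f = ∑ e ∈ s, ∑ f ∈ t, d e f := by
    rw [Finset.sum_comm]; simp only [hsymm]
  simp only [Finset.sum_union hst, Finset.sum_add_distrib, hts]
  ring

theorem sum_sum_add_add_one (s : Finset α) (t : Finset β) (a : α → ℕ) (b : β → ℕ) :
    ∑ x ∈ s, ∑ y ∈ t, (a x + b y + 1)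
      = t.card * ∑ x ∈ s, a x + s.card * ∑ y ∈ t, b y + s.card * t.card := by
  simp only [Finset.sum_add_distrib, Finset.sum_const, smul_eq_mul, Finset.mul_sum]
  ring

end DoubleSums

section JoinAt

variable {V1 V2 : Type*} {G1 : SimpleGraph V1} {G2 : SimpleGraph V2} {u1 : V1} {u2 : V2}

theorem glueVert_self : glueVert u1 u2 u2 = Sum.inl u1 := dif_pos rfl

theorem glueVert_of_ne {y : V2} (hy : y ≠ u2) : glueVert u1 u2 y = Sum.inr ⟨y, hy⟩ := dif_neg hy

theorem glueVert_injective : Function.Injective (glueVert u1 u2) := by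
  intro a b hab
  unfold glueVert at hab
  split_ifs at hab <;> simp_all [Subtype.ext_iff]

noncomputable def glueEmb (u1 : V1) (u2 : V2) : V2 ↪ V1 ⊕ {y : V2 // y ≠ u2} :=
  ⟨glueVert u1 u2, glueVert_injective⟩

theorem joinAt_eq_sup :
    joinAt G1 G2 u1 u2 = G1.map Function.Embedding.inl ⊔ G2.map (glueEmb u1 u2) := by
  ext a b
  simp only [joinAt, SimpleGraph.fromRel_adj, SimpleGraph.sup_adj, SimpleGraph.map_adj]
  constructor
  · rintro ⟨-, (⟨x, y, h, rfl, rfl⟩ | ⟨x, y, h, rfl, rfl⟩) |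
      (⟨x, y, h, rfl, rfl⟩ | ⟨x, y, h, rfl, rfl⟩)⟩
    · exact .inl ⟨x, y, h, rfl, rfl⟩
    · exact .inr ⟨x, y, h, rfl, rfl⟩
    · exact .inl ⟨y, x, h.symm, rfl, rfl⟩
    · exact .inr ⟨y, x, h.symm, rfl, rfl⟩
  · rintro (⟨x, y, h, rfl, rfl⟩ | ⟨x, y, h, rfl, rfl⟩)
    · exact ⟨Sum.inl_injective.ne h.ne, .inl (.inl ⟨x, y, h, rfl, rfl⟩)⟩
    · exact ⟨glueVert_injective.ne h.ne, .inl (.inr ⟨x, y, h, rfl, rfl⟩)⟩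

noncomputable def joinAtInl : G1 →g joinAt G1 G2 u1 u2 where
  toFun := Sum.inl
  map_rel' h := by
    rw [joinAt_eq_sup]
    exact .inl ((SimpleGraph.map_adj _ _ _ _).2 ⟨_, _, h, rfl, rfl⟩)

noncomputable def joinAtGlue : G2 →g joinAt G1 G2 u1 u2 where
  toFun := glueVert u1 u2
  map_rel' h := by
    rw [joinAt_eq_sup]
    exact .inr ((SimpleGraph.map_adj _ _ _ _).2 ⟨_, _, h, rfl, rfl⟩)

theorem joinAt_connected (h1 : G1.Connected) (h2 : G2.Connected) :
    (joinAt G1 G2 u1 u2).Connected := by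
  refine (connected_iff_exists_forall_reachable _).2 ⟨Sum.inl u1, ?_⟩
  rintro (x | ⟨y, hy⟩)
  · exact (h1.preconnected u1 x).map joinAtInl
  · have : (joinAt G1 G2 u1 u2).Reachable (glueVert u1 u2 u2) (glueVert u1 u2 y) :=
      (h2.preconnected u2 y).map joinAtGlue
    rwa [glueVert_self, glueVert_of_ne hy] at this

def joinAtProj (u1 : V1) (u2 : V2) : V1 ⊕ {y : V2 // y ≠ u2} → V1 × V2 :=
  Sum.elim (fun x => (x, u2)) (fun y => (u1, y.1))

theorem joinAtProj_inl (x : V1) : joinAtProj u1 u2 (Sum.inl x) = (x, u2) := rfl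

theorem joinAtProj_glueVert (y : V2) : joinAtProj u1 u2 (glueVert u1 u2 y) = (u1, y) := by
  by_cases hy : y = u2
  · rw [hy, glueVert_self]; rfl
  · rw [glueVert_of_ne hy]; rfl

def joinAtProjHom : joinAt G1 G2 u1 u2 →g G1 □ G2 where
  toFun := joinAtProj u1 u2
  map_rel' h := by
    rw [joinAt_eq_sup] at h
    rcases h with h | h <;> obtain ⟨x, y, hxy, rfl, rfl⟩ := (SimpleGraph.map_adj _ _ _ _).1 h
    · exact boxProd_adj_left.2 hxy
    · rw [glueEmb, Function.Embedding.coeFn_mk, joinAtProj_glueVert, joinAtProj_glueVert]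
      exact boxProd_adj_right.2 hxy

end JoinAt

section JoinAtDistances

variable {V1 V2 : Type*} {G1 : SimpleGraph V1} {G2 : SimpleGraph V2} {u1 : V1} {u2 : V2}

theorem dist_joinAtProj_le (h1 : G1.Connected) (h2 : G2.Connected)
    (a b : V1 ⊕ {y : V2 // y ≠ u2}) :
    G1.dist (joinAtProj u1 u2 a).1 (joinAtProj u1 u2 b).1
      + G2.dist (joinAtProj u1 u2 a).2 (joinAtProj u1 u2 b).2 ≤ (joinAt G1 G2 u1 u2).dist a b := by
  rw [← SimpleGraph.dist_boxProd_of_reachable (h1.preconnected _ _) (h2.preconnected _ _)]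
  exact joinAtProjHom.dist_map_le ((joinAt_connected h1 h2).preconnected a b)

theorem dist_joinAt_inl_inl (h1 : G1.Connected) (h2 : G2.Connected) (x y : V1) :
    (joinAt G1 G2 u1 u2).dist (Sum.inl x) (Sum.inl y) = G1.dist x y := by
  refine le_antisymm (joinAtInl.dist_map_le (h1.preconnected x y)) ?_
  simpa [joinAtProj_inl] using dist_joinAtProj_le h1 h2 (Sum.inl x) (Sum.inl y)

theorem dist_joinAt_glueVert_glueVert (h1 : G1.Connected) (h2 : G2.Connected) (x y : V2) :
    (joinAt G1 G2 u1 u2).dist (glueVert u1 u2 x) (glueVert u1 u2 y) = G2.dist x y := by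
  refine le_antisymm (joinAtGlue.dist_map_le (h2.preconnected x y)) ?_
  simpa [joinAtProj_glueVert] using
    dist_joinAtProj_le (u1 := u1) h1 h2 (glueVert u1 u2 x) (glueVert u1 u2 y)

theorem dist_joinAt_inl_glueVert (h1 : G1.Connected) (h2 : G2.Connected) (x : V1) (y : V2) :
    (joinAt G1 G2 u1 u2).dist (Sum.inl x) (glueVert u1 u2 y) = G1.dist u1 x + G2.dist u2 y := by
  refine le_antisymm ?_ ?_
  · calc (joinAt G1 G2 u1 u2).dist (Sum.inl x) (glueVert u1 u2 y)
        ≤ (joinAt G1 G2 u1 u2).dist (Sum.inl x) (Sum.inl u1)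
          + (joinAt G1 G2 u1 u2).dist (glueVert u1 u2 u2) (glueVert u1 u2 y) := by
          rw [glueVert_self]; exact (joinAt_connected h1 h2).dist_triangle
      _ = G1.dist u1 x + G2.dist u2 y := by
          rw [dist_joinAt_inl_inl h1 h2, dist_joinAt_glueVert_glueVert h1 h2, SimpleGraph.dist_comm]
  · simpa [joinAtProj_inl, joinAtProj_glueVert, SimpleGraph.dist_comm] using
      dist_joinAtProj_le (u1 := u1) h1 h2 (Sum.inl x) (glueVert u1 u2 y)

theorem map_inl_ne_map_glueVert (g : Sym2 V1) {f : Sym2 V2} (hf : ¬f.IsDiag) :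
    g.map Sum.inl ≠ f.map (glueVert u1 u2) := by
  obtain ⟨c, hc, hcu⟩ : ∃ c ∈ f, c ≠ u2 := by
    induction f using Sym2.ind with | _ a b =>
    by_cases ha : a = u2
    · exact ⟨b, Sym2.mem_mk_right a b, fun hb => hf (Sym2.mk_isDiag_iff.2 (ha.trans hb.symm))⟩
    · exact ⟨a, Sym2.mem_mk_left a b, ha⟩
  intro h
  have hmem : glueVert u1 u2 c ∈ f.map (glueVert u1 u2) := Sym2.mem_map.2 ⟨c, hc, rfl⟩
  rw [← h, glueVert_of_ne hcu] at hmem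
  obtain ⟨x, -, hx⟩ := Sym2.mem_map.1 hmem
  exact Sum.inl_ne_inr hx

theorem eDist_joinAt_map_inl_map_glueVert (h1 : G1.Connected) (h2 : G2.Connected)
    (g : Sym2 V1) {f : Sym2 V2} (hf : ¬f.IsDiag) :
    eDist (joinAt G1 G2 u1 u2) (g.map Sum.inl) (f.map (glueVert u1 u2))
      = vDist (joinAt G1 G2 u1 u2) (Sum.inl u1) (g.map Sum.inl)
        + vDist (joinAt G1 G2 u1 u2) (Sum.inl u1) (f.map (glueVert u1 u2)) + 1 := by
  refine eDist_eq_vDist_add_vDist_add_one (map_inl_ne_map_glueVert g hf) _ ?_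
  simp only [Sym2.mem_map]
  rintro _ ⟨x, -, rfl⟩ _ ⟨y, -, rfl⟩
  rw [dist_joinAt_inl_glueVert h1 h2, dist_joinAt_inl_inl h1 h2, ← glueVert_self,
    dist_joinAt_glueVert_glueVert h1 h2]

theorem edgeFinset_joinAt [Fintype V1] [Fintype V2] :
    (joinAt G1 G2 u1 u2).edgeFinset
      = G1.edgeFinset.map Function.Embedding.inl.sym2Map
        ∪ G2.edgeFinset.map (glueEmb u1 u2).sym2Map := by
  rw [← Finset.coe_inj]
  push_cast
  rw [joinAt_eq_sup, SimpleGraph.edgeSet_sup, SimpleGraph.edgeSet_map, SimpleGraph.edgeSet_map]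

theorem disjoint_edgeFinset_map_inl_map_glueEmb [Fintype V1] [Fintype V2] :
    Disjoint (G1.edgeFinset.map Function.Embedding.inl.sym2Map)
      (G2.edgeFinset.map (glueEmb u1 u2).sym2Map) := by
  simp only [Finset.disjoint_left, Finset.mem_map, SimpleGraph.mem_edgeFinset]
  rintro _ ⟨g, -, rfl⟩ ⟨f, hf, hgf⟩
  exact map_inl_ne_map_glueVert g (G2.not_isDiag_of_mem_edgeSet hf) hgf.symm

end JoinAtDistances

theorem stmt0_general {V1 V2 : Type*} [Fintype V1] [Fintype V2]
    (G1 : SimpleGraph V1) (G2 : SimpleGraph V2)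
    (h1 : G1.Connected) (h2 : G2.Connected)
    (u1 : V1) (u2 : V2)
    (m1 m2 : ℕ) (hm1 : m1 = G1.edgeFinset.card) (hm2 : m2 = G2.edgeFinset.card) :
    edgeWiener (joinAt G1 G2 u1 u2)
      = edgeWiener G1 + edgeWiener G2
        + m1 * (∑ f ∈ G2.edgeFinset,
            vDist (joinAt G1 G2 u1 u2) (Sum.inl u1) (f.map (glueVert u1 u2)))
        + m2 * (∑ g ∈ G1.edgeFinset,
            vDist (joinAt G1 G2 u1 u2) (Sum.inl u1) (g.map Sum.inl))
        + m1 * m2 := by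
  have hcross : ∑ g ∈ G1.edgeFinset, ∑ f ∈ G2.edgeFinset,
      eDist (joinAt G1 G2 u1 u2) (g.map Sum.inl) (f.map (glueVert u1 u2))
        = m2 * ∑ g ∈ G1.edgeFinset, vDist (joinAt G1 G2 u1 u2) (Sum.inl u1) (g.map Sum.inl)
          + m1 * ∑ f ∈ G2.edgeFinset,
              vDist (joinAt G1 G2 u1 u2) (Sum.inl u1) (f.map (glueVert u1 u2))
          + m1 * m2 := by
    rw [hm1, hm2, ← sum_sum_add_add_one]
    refine Finset.sum_congr rfl fun g _ => Finset.sum_congr rfl fun f hf => ?_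
    exact eDist_joinAt_map_inl_map_glueVert h1 h2 g
      (G2.not_isDiag_of_mem_edgeSet (SimpleGraph.mem_edgeFinset.1 hf))
  -- `edgeWiener` halves a double sum in `ℕ`, so the parity of each block matters.
  obtain ⟨a, ha⟩ := even_sum_sum_of_symm G1.edgeFinset (eDist G1) eDist_comm eDist_self
  obtain ⟨b, hb⟩ := even_sum_sum_of_symm G2.edgeFinset (eDist G2) eDist_comm eDist_self
  unfold edgeWiener
  rw [edgeFinset_joinAt, sum_sum_union_of_symm disjoint_edgeFinset_map_inl_map_glueEmb _
    eDist_comm]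
  simp only [Finset.sum_map, Function.Embedding.sym2Map_apply, Function.Embedding.inl_apply,
    glueEmb, Function.Embedding.coeFn_mk,
    eDist_map Sum.inl_injective (dist_joinAt_inl_inl h1 h2),
    eDist_map glueVert_injective (dist_joinAt_glueVert_glueVert h1 h2), hcross, ha, hb]
  omega

theorem stmt0 {V1 V2 : Type*} [Fintype V1] [Fintype V2]
    (G1 : SimpleGraph V1) (G2 : SimpleGraph V2)
    (h1 : G1.Connected) (h2 : G2.Connected)
    (hn1 : 2 ≤ Fintype.card V1) (hn2 : 2 ≤ Fintype.card V2)
    (u1 : V1) (u2 : V2)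
    (m1 m2 : ℕ) (hm1 : m1 = G1.edgeFinset.card) (hm2 : m2 = G2.edgeFinset.card)
    (hm1' : 1 ≤ m1) (hm2' : 1 ≤ m2) :
    edgeWiener (joinAt G1 G2 u1 u2)
      = edgeWiener G1 + edgeWiener G2
        + m1 * (∑ f ∈ G2.edgeFinset,
            vDist (joinAt G1 G2 u1 u2) (Sum.inl u1) (f.map (glueVert u1 u2)))
        + m2 * (∑ g ∈ G1.edgeFinset,
            vDist (joinAt G1 G2 u1 u2) (Sum.inl u1) (g.map Sum.inl))
        + m1 * m2 :=
  stmt0_general G1 G2 h1 h2 u1 u2 m1 m2 hm1 hm2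
end

section
/- Let G1, G2, G3 be pairwise disjoint connected simple graphs with |V(Gi)| ≥ 2 and mi = |E(Gi)| ≥ 1, with chosen vertices xi ∈ V(Gi), and let u2 ∈ V(G2) be a vertex at maximum distance from x2 in G2. Let G0 be obtained from G2, G3 and the triangle C3 = v1v2v3v1 by identifying x2 with v2 and x3 with v3. Let G be obtained from G0 and G1 by identifying x1 with v1, and let G' be obtained from G0 and G1 by identifying x1 with u2. If m3 ≥ m2, then W_e(G) < W_e(G'). -/
open SimpleGraph Finset
open scoped Classical

/-- The graph obtained from disjoint graphs `G2`, `G3` and a triangle `v1v2v3` by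
identifying `x2 ∈ V(G2)` with `v2` and `x3 ∈ V(G3)` with `v3`; the vertex `none`
plays the role of `v1`. -/
noncomputable def triGlue {V2 V3 : Type*} (G2 : SimpleGraph V2) (G3 : SimpleGraph V3)
    (x2 : V2) (x3 : V3) : SimpleGraph (Option (V2 ⊕ V3)) :=
  SimpleGraph.fromRel (fun a b =>
    (∃ x y, G2.Adj x y ∧ a = some (Sum.inl x) ∧ b = some (Sum.inl y)) ∨
    (∃ x y, G3.Adj x y ∧ a = some (Sum.inr x) ∧ b = some (Sum.inr y)) ∨
    (a = none ∧ b = some (Sum.inl x2)) ∨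
    (a = none ∧ b = some (Sum.inr x3)) ∨
    (a = some (Sum.inl x2) ∧ b = some (Sum.inr x3)))


namespace EWaux


variable {V W : Type*} {G : SimpleGraph V} {H : SimpleGraph W}

lemma pseudo_walk (π : V → W) (hπ : ∀ ⦃a b⦄, G.Adj a b → H.Adj (π a) (π b) ∨ π a = π b)
    {u v : V} (p : G.Walk u v) : ∃ q : H.Walk (π u) (π v), q.length ≤ p.length := by
  induction p with
  | nil => exact ⟨.nil, le_rfl⟩
  | cons h p ih =>
    obtain ⟨q, hq⟩ := ih
    rcases hπ h with h' | h'
    · exact ⟨.cons h' q, by simp; omega⟩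
    · exact ⟨q.copy h'.symm rfl, by simp [SimpleGraph.Walk.length_copy]; omega⟩

lemma pseudo_dist_le (π : V → W) (hπ : ∀ ⦃a b⦄, G.Adj a b → H.Adj (π a) (π b) ∨ π a = π b)
    {u v : V} (p : G.Walk u v) : H.dist (π u) (π v) ≤ p.length := by
  obtain ⟨q, hq⟩ := pseudo_walk π hπ p
  exact le_trans (SimpleGraph.dist_le q) hq

lemma pseudo_dist_le_dist (π : V → W) (hπ : ∀ ⦃a b⦄, G.Adj a b → H.Adj (π a) (π b) ∨ π a = π b)
    {u v : V} (hr : G.Reachable u v) : H.dist (π u) (π v) ≤ G.dist u v := by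
  obtain ⟨p, hp⟩ := hr.exists_walk_length_eq_dist
  exact hp ▸ pseudo_dist_le π hπ p

lemma pseudo_reachable (π : V → W) (hπ : ∀ ⦃a b⦄, G.Adj a b → H.Adj (π a) (π b) ∨ π a = π b)
    {u v : V} (hr : G.Reachable u v) : H.Reachable (π u) (π v) := by
  obtain ⟨p⟩ := hr
  obtain ⟨q, -⟩ := pseudo_walk π hπ p
  exact ⟨q⟩

lemma pseudo_dist_peel (π : V → W) (hπ : ∀ ⦃a b⦄, G.Adj a b → H.Adj (π a) (π b) ∨ π a = π b)
    {u v : V} (hne : u ≠ v) (hr : G.Reachable u v)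
    (hfirst : ∀ b, G.Adj u b → π b = π u) :
    H.dist (π u) (π v) + 1 ≤ G.dist u v := by
  obtain ⟨p, hp⟩ := hr.exists_walk_length_eq_dist
  cases p with
  | nil => exact absurd rfl hne
  | @cons _ b _ h q =>
    have h2 := pseudo_dist_le π hπ q
    rw [hfirst _ h] at h2
    simp only [SimpleGraph.Walk.length_cons] at hp
    omega

lemma mandatory {S : Set V} {m : V}
    (hclosed : ∀ a b, G.Adj a b → a ∈ S → a ≠ m → b ∈ S) :
    ∀ {u v : V} (p : G.Walk u v), u ∈ S → v ∉ S → m ∈ p.support := by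
  intro u v p
  induction p with
  | nil => intro h h'; exact absurd h h'
  | @cons a b _ h q ih =>
    intro hu hv
    by_cases hum : a = m
    · simp [SimpleGraph.Walk.support_cons, hum]
    · have hb := hclosed _ _ h hu hum
      simp only [SimpleGraph.Walk.support_cons, List.mem_cons]
      exact Or.inr (ih hb hv)

lemma dist_split_at {u v m : V} (hr : G.Reachable u v)
    (hmand : ∀ p : G.Walk u v, m ∈ p.support) :
    G.dist u m + G.dist m v ≤ G.dist u v := by
  obtain ⟨p, hp⟩ := hr.exists_walk_length_eq_dist
  have hm := hmand p
  have h1 := SimpleGraph.dist_le (p.takeUntil m hm)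
  have h2 := SimpleGraph.dist_le (p.dropUntil m hm)
  have h3 : (p.takeUntil m hm).length + (p.dropUntil m hm).length = p.length := by
    rw [← SimpleGraph.Walk.length_append, SimpleGraph.Walk.take_spec]
  omega


lemma vDist_mk (G : SimpleGraph V) (v a b : V) :
    vDist G v s(a, b) = min (G.dist v a) (G.dist v b) := by
  unfold vDist
  apply le_antisymm
  · refine le_min (Nat.sInf_le ⟨a, by simp, rfl⟩) (Nat.sInf_le ⟨b, by simp, rfl⟩)
  · have hne : {n : ℕ | ∃ u ∈ s(a, b), G.dist v u = n}.Nonempty := ⟨_, a, by simp, rfl⟩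
    obtain ⟨u, hu, heq⟩ := Nat.sInf_mem hne
    rcases Sym2.mem_iff.mp hu with h | h <;> subst h
    · rw [← heq]; exact min_le_left _ _
    · rw [← heq]; exact min_le_right _ _

lemma eDist_mk (G : SimpleGraph V) {a b p q : V} (h : s(a, b) ≠ s(p, q)) :
    eDist G s(a, b) s(p, q) =
      min (min (G.dist a p) (G.dist a q)) (min (G.dist b p) (G.dist b q)) + 1 := by
  unfold eDist
  rw [if_neg h]
  congr 1
  apply le_antisymm
  · refine le_min (le_min (Nat.sInf_le ⟨a, by simp, p, by simp, rfl⟩)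
      (Nat.sInf_le ⟨a, by simp, q, by simp, rfl⟩))
      (le_min (Nat.sInf_le ⟨b, by simp, p, by simp, rfl⟩)
      (Nat.sInf_le ⟨b, by simp, q, by simp, rfl⟩))
  · have hne : {n : ℕ | ∃ u ∈ s(a, b), ∃ w ∈ s(p, q), G.dist u w = n}.Nonempty :=
      ⟨_, a, by simp, p, by simp, rfl⟩
    obtain ⟨u, hu, w, hw, heq⟩ := Nat.sInf_mem hne
    rw [← heq]
    rcases Sym2.mem_iff.mp hu with h1 | h1 <;> subst h1 <;>
      rcases Sym2.mem_iff.mp hw with h2 | h2 <;> subst h2 <;> omega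

lemma eDist_comm (G : SimpleGraph V) (e f : Sym2 V) : eDist G e f = eDist G f e := by
  unfold eDist
  rcases eq_or_ne e f with rfl | h
  · simp
  · rw [if_neg h, if_neg h.symm]
    congr 2
    ext n
    constructor
    · rintro ⟨u, hu, w, hw, rfl⟩; exact ⟨w, hw, u, hu, SimpleGraph.dist_comm ▸ rfl⟩
    · rintro ⟨u, hu, w, hw, rfl⟩; exact ⟨w, hw, u, hu, SimpleGraph.dist_comm ▸ rfl⟩

lemma eDist_self (G : SimpleGraph V) (e : Sym2 V) : eDist G e e = 0 := by
  unfold eDist; simp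

section Join

variable {VK V1 : Type*} (K : SimpleGraph VK) (G1 : SimpleGraph V1) (c : VK) (x1 : V1)

lemma glueVert_injective : Function.Injective (glueVert c x1 : V1 → VK ⊕ {y : V1 // y ≠ x1}) := by
  intro a b h
  unfold glueVert at h
  split_ifs at h <;> simp_all

lemma glueVert_x1 : glueVert c x1 x1 = Sum.inl c := by simp [glueVert]

lemma glueVert_ne {y : V1} (hy : y ≠ x1) : glueVert c x1 y = Sum.inr ⟨y, hy⟩ := by
  simp [glueVert, hy]

lemma glueVert_eq_inl {y : V1} {b : VK} (h : glueVert c x1 y = Sum.inl b) :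
    y = x1 ∧ b = c := by
  unfold glueVert at h
  split_ifs at h with h1 <;> simp_all

lemma joinAt_adj_iff {p q : VK ⊕ {y : V1 // y ≠ x1}} : (joinAt K G1 c x1).Adj p q ↔ p ≠ q ∧
    ((∃ a b, K.Adj a b ∧ p = Sum.inl a ∧ q = Sum.inl b) ∨
     (∃ y z, G1.Adj y z ∧ p = glueVert c x1 y ∧ q = glueVert c x1 z)) := by
  rw [joinAt, SimpleGraph.fromRel_adj]
  constructor
  · rintro ⟨hne, h | h⟩
    · exact ⟨hne, h⟩
    · refine ⟨hne, ?_⟩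
      rcases h with ⟨a, b, h, rfl, rfl⟩ | ⟨y, z, h, rfl, rfl⟩
      · exact Or.inl ⟨b, a, h.symm, rfl, rfl⟩
      · exact Or.inr ⟨z, y, h.symm, rfl, rfl⟩
  · rintro ⟨hne, h⟩
    exact ⟨hne, Or.inl h⟩

lemma joinAt_adj_inl {a b : VK} (h : K.Adj a b) :
    (joinAt K G1 c x1).Adj (Sum.inl a) (Sum.inl b) :=
  (joinAt_adj_iff K G1 c x1).mpr ⟨by simp [h.ne], Or.inl ⟨a, b, h, rfl, rfl⟩⟩

lemma joinAt_adj_glue {y z : V1} (h : G1.Adj y z) :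
    (joinAt K G1 c x1).Adj (glueVert c x1 y) (glueVert c x1 z) :=
  (joinAt_adj_iff K G1 c x1).mpr
    ⟨fun hh => h.ne (glueVert_injective c x1 hh), Or.inr ⟨y, z, h, rfl, rfl⟩⟩

def piK : VK ⊕ {y : V1 // y ≠ x1} → VK := Sum.elim id fun _ => c

def pi1 : VK ⊕ {y : V1 // y ≠ x1} → V1 := Sum.elim (fun _ => x1) Subtype.val

lemma piK_glue (y : V1) : piK c x1 (glueVert c x1 y) = c := by
  unfold glueVert piK; split_ifs <;> simp

lemma pi1_glue (y : V1) : pi1 x1 (glueVert c x1 y) = y := by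
  unfold glueVert pi1; split_ifs with h <;> simp [h]

lemma piK_pseudo : ∀ ⦃p q⦄, (joinAt K G1 c x1).Adj p q →
    K.Adj (piK c x1 p) (piK c x1 q) ∨ piK c x1 p = piK c x1 q := by
  intro p q h
  rcases ((joinAt_adj_iff K G1 c x1).mp h).2 with ⟨a, b, hab, rfl, rfl⟩ | ⟨y, z, _, rfl, rfl⟩
  · exact Or.inl (by simpa [piK] using hab)
  · exact Or.inr (by rw [piK_glue, piK_glue])

lemma pi1_pseudo : ∀ ⦃p q⦄, (joinAt K G1 c x1).Adj p q →
    G1.Adj (pi1 x1 p) (pi1 x1 q) ∨ pi1 x1 p = pi1 x1 q := by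
  intro p q h
  rcases ((joinAt_adj_iff K G1 c x1).mp h).2 with ⟨a, b, _, rfl, rfl⟩ | ⟨y, z, hyz, rfl, rfl⟩
  · exact Or.inr rfl
  · exact Or.inl (by rw [pi1_glue, pi1_glue]; exact hyz)

variable {K G1}

lemma joinAt_reachable_inl {a b : VK} (h : K.Reachable a b) :
    (joinAt K G1 c x1).Reachable (Sum.inl a) (Sum.inl b) :=
  pseudo_reachable Sum.inl (fun _ _ hh => Or.inl (joinAt_adj_inl K G1 c x1 hh)) h

lemma joinAt_reachable_glue {y z : V1} (h : G1.Reachable y z) :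
    (joinAt K G1 c x1).Reachable (glueVert c x1 y) (glueVert c x1 z) :=
  pseudo_reachable (glueVert c x1) (fun _ _ hh => Or.inl (joinAt_adj_glue K G1 c x1 hh)) h

lemma joinAt_connected (hK : K.Connected) (hG1 : G1.Connected) :
    (joinAt K G1 c x1).Connected := by
  rw [connected_iff]
  refine ⟨?_, ⟨Sum.inl c⟩⟩
  have key : ∀ r, (joinAt K G1 c x1).Reachable r (Sum.inl c) := by
    rintro (a | ⟨y, hy⟩)
    · exact joinAt_reachable_inl c x1 (hK a c)
    · have h := joinAt_reachable_glue c x1 (G1 := G1) (K := K) (hG1 y x1)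
      rwa [glueVert_ne c x1 hy, glueVert_x1] at h
  exact fun p q => (key p).trans (key q).symm

variable (hK : K.Connected) (hG1 : G1.Connected)
include hK hG1

lemma joinAt_dist_inl_inl (a b : VK) :
    (joinAt K G1 c x1).dist (Sum.inl a) (Sum.inl b) = K.dist a b := by
  apply le_antisymm
  · exact pseudo_dist_le_dist Sum.inl (fun _ _ hh => Or.inl (joinAt_adj_inl K G1 c x1 hh)) (hK a b)
  · have h := pseudo_dist_le_dist (piK c x1) (piK_pseudo K G1 c x1)
      (joinAt_reachable_inl c x1 (hK a b))
    simpa [piK] using h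

lemma joinAt_dist_glue_glue (y z : V1) :
    (joinAt K G1 c x1).dist (glueVert c x1 y) (glueVert c x1 z) = G1.dist y z := by
  apply le_antisymm
  · exact pseudo_dist_le_dist (glueVert c x1)
      (fun _ _ hh => Or.inl (joinAt_adj_glue K G1 c x1 hh)) (hG1 y z)
  · have h := pseudo_dist_le_dist (pi1 x1) (pi1_pseudo K G1 c x1)
      (joinAt_reachable_glue c x1 (hG1 y z))
    rwa [pi1_glue, pi1_glue] at h

lemma joinAt_dist_inl_glue (a : VK) (y : V1) :
    (joinAt K G1 c x1).dist (Sum.inl a) (glueVert c x1 y)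
      = K.dist a c + G1.dist x1 y := by
  apply le_antisymm
  · have ht := (joinAt_connected c x1 hK hG1).dist_triangle
      (u := Sum.inl a) (v := Sum.inl c) (w := glueVert c x1 y)
    have h1 := joinAt_dist_inl_inl c x1 hK hG1 a c
    have h2 := joinAt_dist_glue_glue c x1 hK hG1 x1 y
    rw [glueVert_x1] at h2
    omega
  · by_cases hy : y = x1
    · rw [hy, glueVert_x1, SimpleGraph.dist_self, joinAt_dist_inl_inl c x1 hK hG1]
      omega
    · rw [glueVert_ne c x1 hy]
      have hmand : ∀ p : (joinAt K G1 c x1).Walk (Sum.inl a) (Sum.inr ⟨y, hy⟩),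
          Sum.inl c ∈ p.support := by
        intro p
        refine mandatory (S := Set.range Sum.inl) ?_ p ⟨a, rfl⟩ (by simp)
        rintro p' q' hadj ⟨b, rfl⟩ hne
        rcases ((joinAt_adj_iff K G1 c x1).mp hadj).2 with
          ⟨a', b', _, _, rfl⟩ | ⟨y', z', _, heq, rfl⟩
        · exact ⟨b', rfl⟩
        · obtain ⟨rfl, rfl⟩ := glueVert_eq_inl c x1 heq.symm
          exact absurd rfl hne
      have hreach : (joinAt K G1 c x1).Reachable (Sum.inl a) (Sum.inr ⟨y, hy⟩) :=
        ((joinAt_connected c x1 hK hG1).preconnected) _ _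
      have hsplit := dist_split_at hreach hmand
      have h1 := joinAt_dist_inl_inl c x1 hK hG1 a c
      have h2 := joinAt_dist_glue_glue c x1 hK hG1 x1 y
      rw [glueVert_x1, glueVert_ne c x1 hy] at h2
      omega

end Join

section Tri

variable {V2 V3 : Type*} (G2 : SimpleGraph V2) (G3 : SimpleGraph V3) (x2 : V2) (x3 : V3)

local notation "i2" => fun a => (some (Sum.inl a) : Option (V2 ⊕ V3))
local notation "i3" => fun b => (some (Sum.inr b) : Option (V2 ⊕ V3))

lemma triGlue_adj_iff {p q : Option (V2 ⊕ V3)} : (triGlue G2 G3 x2 x3).Adj p q ↔ p ≠ q ∧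
    ((∃ a b, G2.Adj a b ∧ p = some (Sum.inl a) ∧ q = some (Sum.inl b)) ∨
     (∃ a b, G3.Adj a b ∧ p = some (Sum.inr a) ∧ q = some (Sum.inr b)) ∨
     ((p = none ∧ q = some (Sum.inl x2)) ∨ (q = none ∧ p = some (Sum.inl x2))) ∨
     ((p = none ∧ q = some (Sum.inr x3)) ∨ (q = none ∧ p = some (Sum.inr x3))) ∨
     ((p = some (Sum.inl x2) ∧ q = some (Sum.inr x3)) ∨
      (q = some (Sum.inl x2) ∧ p = some (Sum.inr x3)))) := by
  rw [triGlue, SimpleGraph.fromRel_adj]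
  constructor
  · rintro ⟨hne, h | h⟩ <;>
    · refine ⟨hne, ?_⟩
      rcases h with ⟨a, b, h, rfl, rfl⟩ | ⟨a, b, h, rfl, rfl⟩ | ⟨rfl, rfl⟩ | ⟨rfl, rfl⟩ | ⟨rfl, rfl⟩
      · first
        | exact Or.inl ⟨a, b, h, rfl, rfl⟩
        | exact Or.inl ⟨b, a, h.symm, rfl, rfl⟩
      · first
        | exact Or.inr (Or.inl ⟨a, b, h, rfl, rfl⟩)
        | exact Or.inr (Or.inl ⟨b, a, h.symm, rfl, rfl⟩)
      · first
        | exact Or.inr (Or.inr (Or.inl (Or.inl ⟨rfl, rfl⟩)))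
        | exact Or.inr (Or.inr (Or.inl (Or.inr ⟨rfl, rfl⟩)))
      · first
        | exact Or.inr (Or.inr (Or.inr (Or.inl (Or.inl ⟨rfl, rfl⟩))))
        | exact Or.inr (Or.inr (Or.inr (Or.inl (Or.inr ⟨rfl, rfl⟩))))
      · first
        | exact Or.inr (Or.inr (Or.inr (Or.inr (Or.inl ⟨rfl, rfl⟩))))
        | exact Or.inr (Or.inr (Or.inr (Or.inr (Or.inr ⟨rfl, rfl⟩))))
  · rintro ⟨hne, h⟩
    refine ⟨hne, ?_⟩
    rcases h with ⟨a, b, h, rfl, rfl⟩ | ⟨a, b, h, rfl, rfl⟩ |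
      (⟨rfl, rfl⟩ | ⟨rfl, rfl⟩) | (⟨rfl, rfl⟩ | ⟨rfl, rfl⟩) | (⟨rfl, rfl⟩ | ⟨rfl, rfl⟩)
    · exact Or.inl (Or.inl ⟨a, b, h, rfl, rfl⟩)
    · exact Or.inl (Or.inr (Or.inl ⟨a, b, h, rfl, rfl⟩))
    · exact Or.inl (Or.inr (Or.inr (Or.inl ⟨rfl, rfl⟩)))
    · exact Or.inr (Or.inr (Or.inr (Or.inl ⟨rfl, rfl⟩)))
    · exact Or.inl (Or.inr (Or.inr (Or.inr (Or.inl ⟨rfl, rfl⟩))))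
    · exact Or.inr (Or.inr (Or.inr (Or.inr (Or.inl ⟨rfl, rfl⟩))))
    · exact Or.inl (Or.inr (Or.inr (Or.inr (Or.inr ⟨rfl, rfl⟩))))
    · exact Or.inr (Or.inr (Or.inr (Or.inr (Or.inr ⟨rfl, rfl⟩))))

lemma triGlue_adj_inl {a b : V2} (h : G2.Adj a b) :
    (triGlue G2 G3 x2 x3).Adj (some (Sum.inl a)) (some (Sum.inl b)) :=
  (triGlue_adj_iff G2 G3 x2 x3).mpr ⟨by simp [h.ne], Or.inl ⟨a, b, h, rfl, rfl⟩⟩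

lemma triGlue_adj_inr {a b : V3} (h : G3.Adj a b) :
    (triGlue G2 G3 x2 x3).Adj (some (Sum.inr a)) (some (Sum.inr b)) :=
  (triGlue_adj_iff G2 G3 x2 x3).mpr ⟨by simp [h.ne], Or.inr (Or.inl ⟨a, b, h, rfl, rfl⟩)⟩

lemma triGlue_adj_none_x2 : (triGlue G2 G3 x2 x3).Adj none (some (Sum.inl x2)) :=
  (triGlue_adj_iff G2 G3 x2 x3).mpr ⟨by simp, Or.inr (Or.inr (Or.inl (Or.inl ⟨rfl, rfl⟩)))⟩

lemma triGlue_adj_none_x3 : (triGlue G2 G3 x2 x3).Adj none (some (Sum.inr x3)) :=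
  (triGlue_adj_iff G2 G3 x2 x3).mpr
    ⟨by simp, Or.inr (Or.inr (Or.inr (Or.inl (Or.inl ⟨rfl, rfl⟩))))⟩

lemma triGlue_adj_x2_x3 :
    (triGlue G2 G3 x2 x3).Adj (some (Sum.inl x2)) (some (Sum.inr x3)) :=
  (triGlue_adj_iff G2 G3 x2 x3).mpr
    ⟨by simp, Or.inr (Or.inr (Or.inr (Or.inr (Or.inl ⟨rfl, rfl⟩))))⟩

def pi2 (x2 : V2) : Option (V2 ⊕ V3) → V2 := fun v => v.elim x2 (Sum.elim id fun _ => x2)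

def pi3 (x3 : V3) : Option (V2 ⊕ V3) → V3 := fun v => v.elim x3 (Sum.elim (fun _ => x3) id)

lemma pi2_pseudo : ∀ ⦃p q⦄, (triGlue G2 G3 x2 x3).Adj p q →
    G2.Adj (pi2 x2 p) (pi2 x2 q) ∨ pi2 x2 p = pi2 x2 q := by
  intro p q h
  rcases ((triGlue_adj_iff G2 G3 x2 x3).mp h).2 with ⟨a, b, ha, rfl, rfl⟩ | ⟨a, b, ha, rfl, rfl⟩ |
    (⟨rfl, rfl⟩ | ⟨rfl, rfl⟩) | (⟨rfl, rfl⟩ | ⟨rfl, rfl⟩) | (⟨rfl, rfl⟩ | ⟨rfl, rfl⟩) <;>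
    simp [pi2]
  exact Or.inl ha

lemma pi3_pseudo : ∀ ⦃p q⦄, (triGlue G2 G3 x2 x3).Adj p q →
    G3.Adj (pi3 x3 p) (pi3 x3 q) ∨ pi3 x3 p = pi3 x3 q := by
  intro p q h
  rcases ((triGlue_adj_iff G2 G3 x2 x3).mp h).2 with ⟨a, b, ha, rfl, rfl⟩ | ⟨a, b, ha, rfl, rfl⟩ |
    (⟨rfl, rfl⟩ | ⟨rfl, rfl⟩) | (⟨rfl, rfl⟩ | ⟨rfl, rfl⟩) | (⟨rfl, rfl⟩ | ⟨rfl, rfl⟩) <;>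
    simp [pi3]
  exact Or.inl ha

variable {G2 G3}

lemma triGlue_reachable_inl {a b : V2} (h : G2.Reachable a b) :
    (triGlue G2 G3 x2 x3).Reachable (some (Sum.inl a)) (some (Sum.inl b)) :=
  pseudo_reachable (fun a => some (Sum.inl a))
    (fun _ _ hh => Or.inl (triGlue_adj_inl G2 G3 x2 x3 hh)) h

lemma triGlue_reachable_inr {a b : V3} (h : G3.Reachable a b) :
    (triGlue G2 G3 x2 x3).Reachable (some (Sum.inr a)) (some (Sum.inr b)) :=
  pseudo_reachable (fun a => some (Sum.inr a))
    (fun _ _ hh => Or.inl (triGlue_adj_inr G2 G3 x2 x3 hh)) h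

lemma triGlue_connected (h2 : G2.Connected) (h3 : G3.Connected) :
    (triGlue G2 G3 x2 x3).Connected := by
  rw [connected_iff]
  refine ⟨?_, ⟨none⟩⟩
  have key : ∀ r, (triGlue G2 G3 x2 x3).Reachable r none := by
    rintro (_ | (a | b))
    · rfl
    · exact (triGlue_reachable_inl x2 x3 (h2 a x2)).trans
        (triGlue_adj_none_x2 G2 G3 x2 x3).symm.reachable
    · exact (triGlue_reachable_inr x2 x3 (h3 b x3)).trans
        (triGlue_adj_none_x3 G2 G3 x2 x3).symm.reachable
  exact fun p q => (key p).trans (key q).symm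

variable (h2 : G2.Connected) (h3 : G3.Connected)
include h2 h3

lemma triGlue_dist_inl_inl (a b : V2) :
    (triGlue G2 G3 x2 x3).dist (some (Sum.inl a)) (some (Sum.inl b)) = G2.dist a b := by
  apply le_antisymm
  · exact pseudo_dist_le_dist (fun a => some (Sum.inl a))
      (fun _ _ hh => Or.inl (triGlue_adj_inl G2 G3 x2 x3 hh)) (h2 a b)
  · have h := pseudo_dist_le_dist (pi2 x2) (pi2_pseudo G2 G3 x2 x3)
      (triGlue_reachable_inl x2 x3 (h2 a b))
    simpa [pi2] using h

lemma triGlue_dist_inr_inr (a b : V3) :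
    (triGlue G2 G3 x2 x3).dist (some (Sum.inr a)) (some (Sum.inr b)) = G3.dist a b := by
  apply le_antisymm
  · exact pseudo_dist_le_dist (fun a => some (Sum.inr a))
      (fun _ _ hh => Or.inl (triGlue_adj_inr G2 G3 x2 x3 hh)) (h3 a b)
  · have h := pseudo_dist_le_dist (pi3 x3) (pi3_pseudo G2 G3 x2 x3)
      (triGlue_reachable_inr x2 x3 (h3 a b))
    simpa [pi3] using h

lemma triGlue_none_adj {q : Option (V2 ⊕ V3)} (h : (triGlue G2 G3 x2 x3).Adj none q) :
    q = some (Sum.inl x2) ∨ q = some (Sum.inr x3) := by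
  rcases ((triGlue_adj_iff G2 G3 x2 x3).mp h).2 with ⟨a, b, _, h1, _⟩ | ⟨a, b, _, h1, _⟩ |
    (⟨_, rfl⟩ | ⟨h1, _⟩) | (⟨_, rfl⟩ | ⟨h1, _⟩) | (⟨h1, _⟩ | ⟨_, h1⟩) <;>
    simp_all

lemma triGlue_dist_none_inl (a : V2) :
    (triGlue G2 G3 x2 x3).dist none (some (Sum.inl a)) = G2.dist x2 a + 1 := by
  apply le_antisymm
  · have ht := (triGlue_connected x2 x3 h2 h3).dist_triangle
      (u := (none : Option (V2 ⊕ V3))) (v := some (Sum.inl x2)) (w := some (Sum.inl a))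
    have h1 : (triGlue G2 G3 x2 x3).dist none (some (Sum.inl x2)) ≤ 1 := by
      have := SimpleGraph.dist_le (SimpleGraph.Walk.cons
        (triGlue_adj_none_x2 G2 G3 x2 x3) SimpleGraph.Walk.nil)
      simpa using this
    have h2' := triGlue_dist_inl_inl x2 x3 h2 h3 x2 a
    omega
  · have h := pseudo_dist_peel (pi2 x2) (pi2_pseudo G2 G3 x2 x3)
      (u := (none : Option (V2 ⊕ V3))) (v := some (Sum.inl a))
      (by simp) ((triGlue_connected x2 x3 h2 h3).preconnected _ _)
      (fun b hb => by rcases triGlue_none_adj x2 x3 h2 h3 hb with rfl | rfl <;> simp [pi2])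
    simpa [pi2] using h

lemma triGlue_dist_none_inr (b : V3) :
    (triGlue G2 G3 x2 x3).dist none (some (Sum.inr b)) = G3.dist x3 b + 1 := by
  apply le_antisymm
  · have ht := (triGlue_connected x2 x3 h2 h3).dist_triangle
      (u := (none : Option (V2 ⊕ V3))) (v := some (Sum.inr x3)) (w := some (Sum.inr b))
    have h1 : (triGlue G2 G3 x2 x3).dist none (some (Sum.inr x3)) ≤ 1 := by
      have := SimpleGraph.dist_le (SimpleGraph.Walk.cons
        (triGlue_adj_none_x3 G2 G3 x2 x3) SimpleGraph.Walk.nil)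
      simpa using this
    have h3' := triGlue_dist_inr_inr x2 x3 h2 h3 x3 b
    omega
  · have h := pseudo_dist_peel (pi3 x3) (pi3_pseudo G2 G3 x2 x3)
      (u := (none : Option (V2 ⊕ V3))) (v := some (Sum.inr b))
      (by simp) ((triGlue_connected x2 x3 h2 h3).preconnected _ _)
      (fun b hb => by rcases triGlue_none_adj x2 x3 h2 h3 hb with rfl | rfl <;> simp [pi3])
    simpa [pi3] using h

lemma triGlue_inlx2_adj {q : Option (V2 ⊕ V3)}
    (h : (triGlue G2 G3 x2 x3).Adj (some (Sum.inl x2)) q) : pi3 x3 q = x3 := by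
  rcases ((triGlue_adj_iff G2 G3 x2 x3).mp h).2 with ⟨a, b, _, h1, rfl⟩ | ⟨a, b, _, h1, _⟩ |
    (⟨h1, _⟩ | ⟨rfl, _⟩) | (⟨h1, _⟩ | ⟨_, h1⟩) | (⟨_, rfl⟩ | ⟨_, h1⟩) <;>
    simp_all [pi3]

lemma triGlue_dist_inl_inr (a : V2) (b : V3) :
    (triGlue G2 G3 x2 x3).dist (some (Sum.inl a)) (some (Sum.inr b))
      = G2.dist a x2 + G3.dist x3 b + 1 := by
  apply le_antisymm
  · have ht := (triGlue_connected x2 x3 h2 h3).dist_triangle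
      (u := some (Sum.inl a)) (v := some (Sum.inl x2)) (w := some (Sum.inr b))
    have ht2 := (triGlue_connected x2 x3 h2 h3).dist_triangle
      (u := some (Sum.inl x2)) (v := some (Sum.inr x3)) (w := some (Sum.inr b))
    have h1 : (triGlue G2 G3 x2 x3).dist (some (Sum.inl x2)) (some (Sum.inr x3)) ≤ 1 := by
      have := SimpleGraph.dist_le (SimpleGraph.Walk.cons
        (triGlue_adj_x2_x3 G2 G3 x2 x3) SimpleGraph.Walk.nil)
      simpa using this
    have h2' := triGlue_dist_inl_inl x2 x3 h2 h3 a x2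
    have h3' := triGlue_dist_inr_inr x2 x3 h2 h3 x3 b
    omega
  · have hmand : ∀ p : (triGlue G2 G3 x2 x3).Walk (some (Sum.inl a)) (some (Sum.inr b)),
        some (Sum.inl x2) ∈ p.support := by
      intro p
      refine mandatory (S := {v | ∃ a', v = some (Sum.inl a')}) ?_ p ⟨a, rfl⟩ (by simp)
      rintro p' q' hadj ⟨b', rfl⟩ hne
      rcases ((triGlue_adj_iff G2 G3 x2 x3).mp hadj).2 with ⟨a', b'', _, _, rfl⟩ |
        ⟨a', b'', _, h1, _⟩ | (⟨h1, _⟩ | ⟨_, h1⟩) | (⟨h1, _⟩ | ⟨_, h1⟩) | (⟨h1, rfl⟩ | ⟨_, h1⟩)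
      · exact ⟨b'', rfl⟩
      all_goals simp_all
    have hsplit := dist_split_at ((triGlue_connected x2 x3 h2 h3).preconnected _ _) hmand
    have h1 := triGlue_dist_inl_inl x2 x3 h2 h3 a x2
    have hpeel := pseudo_dist_peel (pi3 x3) (pi3_pseudo G2 G3 x2 x3)
      (u := some (Sum.inl x2)) (v := some (Sum.inr b))
      (by simp) ((triGlue_connected x2 x3 h2 h3).preconnected
        (some (Sum.inl x2)) (some (Sum.inr b)))
      (fun q hq => by rw [triGlue_inlx2_adj x2 x3 h2 h3 hq]; simp [pi3])
    rw [show pi3 x3 (some (Sum.inl x2)) = x3 from rfl,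
      show pi3 x3 (some (Sum.inr b)) = b from rfl] at hpeel
    omega

end Tri

section JoinSum

variable {VK V1 : Type*} (K : SimpleGraph VK) (G1 : SimpleGraph V1) (c : VK) (x1 : V1)

lemma inl_pair_ne_glue_pair {a b : VK} {y z : V1} (hyz : y ≠ z) :
    s(Sum.inl a, Sum.inl b) ≠ Sym2.map (glueVert c x1) s(y, z) := by
  intro h
  by_cases hz : z = x1
  · have hy : y ≠ x1 := by rw [hz] at hyz; exact hyz
    have hmem : glueVert c x1 y ∈ s((Sum.inl a : VK ⊕ {w : V1 // w ≠ x1}), Sum.inl b) := by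
      rw [h, Sym2.map_pair_eq]; simp
    rw [glueVert_ne c x1 hy] at hmem
    simp [Sym2.mem_iff] at hmem
  · have hmem : glueVert c x1 z ∈ s((Sum.inl a : VK ⊕ {w : V1 // w ≠ x1}), Sum.inl b) := by
      rw [h, Sym2.map_pair_eq]; simp
    rw [glueVert_ne c x1 hz] at hmem
    simp [Sym2.mem_iff] at hmem

variable [Fintype VK] [Fintype V1]

lemma joinAt_edgeFinset :
    (joinAt K G1 c x1).edgeFinset
      = K.edgeFinset.image (Sym2.map Sum.inl)
        ∪ G1.edgeFinset.image (Sym2.map (glueVert c x1)) := by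
  ext e
  simp only [Finset.mem_union, Finset.mem_image, mem_edgeFinset]
  constructor
  · intro he
    induction e using Sym2.ind with
    | _ p q =>
      rw [mem_edgeSet, joinAt_adj_iff] at he
      rcases he.2 with ⟨a, b, hab, rfl, rfl⟩ | ⟨y, z, hyz, rfl, rfl⟩
      · exact Or.inl ⟨s(a, b), hab, (Sym2.map_pair_eq _ _ _).symm⟩
      · exact Or.inr ⟨s(y, z), hyz, (Sym2.map_pair_eq _ _ _).symm⟩
  · rintro (⟨e', he', rfl⟩ | ⟨e', he', rfl⟩) <;>
    · induction e' using Sym2.ind with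
      | _ p q =>
        rw [mem_edgeSet] at he'
        rw [Sym2.map_pair_eq, mem_edgeSet]
        first
        | exact joinAt_adj_inl K G1 c x1 he'
        | exact joinAt_adj_glue K G1 c x1 he'

lemma joinAt_edge_disjoint :
    Disjoint (K.edgeFinset.image (Sym2.map Sum.inl))
      (G1.edgeFinset.image (Sym2.map (glueVert c x1))) := by
  rw [Finset.disjoint_left]
  intro e he1 he2
  obtain ⟨e1, he1', rfl⟩ := Finset.mem_image.mp he1
  obtain ⟨e2, he2', heq⟩ := Finset.mem_image.mp he2
  clear he1 he2
  revert heq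
  induction e1 using Sym2.ind with
  | _ a b =>
    revert he2'
    induction e2 using Sym2.ind with
    | _ y z =>
      intro he2' heq
      rw [mem_edgeFinset, mem_edgeSet] at he2'
      rw [Sym2.map_pair_eq, Sym2.map_pair_eq] at heq
      exact inl_pair_ne_glue_pair c x1 he2'.ne
        (by rw [Sym2.map_pair_eq]; exact heq.symm)

variable (hK : K.Connected) (hG1 : G1.Connected)
include hK hG1

lemma eDist_joinAt_inl_inl (e f : Sym2 VK) :
    eDist (joinAt K G1 c x1) (Sym2.map Sum.inl e) (Sym2.map Sum.inl f) = eDist K e f := by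
  rcases eq_or_ne e f with rfl | hne
  · rw [eDist_self, eDist_self]
  · induction e, f using Sym2.inductionOn₂ with
    | _ a b p q =>
      have hne' : s((Sum.inl a : VK ⊕ {w : V1 // w ≠ x1}), Sum.inl b) ≠ s(Sum.inl p, Sum.inl q) := by
        intro h
        exact hne ((Sym2.map.injective Sum.inl_injective) (by
          rw [Sym2.map_pair_eq, Sym2.map_pair_eq]; exact h))
      rw [Sym2.map_pair_eq, Sym2.map_pair_eq, eDist_mk _ hne', eDist_mk _ hne,
        joinAt_dist_inl_inl c x1 hK hG1, joinAt_dist_inl_inl c x1 hK hG1,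
        joinAt_dist_inl_inl c x1 hK hG1, joinAt_dist_inl_inl c x1 hK hG1]

lemma eDist_joinAt_glue_glue (e f : Sym2 V1) :
    eDist (joinAt K G1 c x1) (Sym2.map (glueVert c x1) e) (Sym2.map (glueVert c x1) f)
      = eDist G1 e f := by
  rcases eq_or_ne e f with rfl | hne
  · rw [eDist_self, eDist_self]
  · induction e, f using Sym2.inductionOn₂ with
    | _ a b p q =>
      have hne' : s(glueVert c x1 a, glueVert c x1 b) ≠ s(glueVert c x1 p, glueVert c x1 q) := by
        intro h
        exact hne ((Sym2.map.injective (glueVert_injective c x1)) (by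
          rw [Sym2.map_pair_eq, Sym2.map_pair_eq]; exact h))
      rw [Sym2.map_pair_eq, Sym2.map_pair_eq, eDist_mk _ hne', eDist_mk _ hne,
        joinAt_dist_glue_glue c x1 hK hG1, joinAt_dist_glue_glue c x1 hK hG1,
        joinAt_dist_glue_glue c x1 hK hG1, joinAt_dist_glue_glue c x1 hK hG1]

lemma eDist_joinAt_cross (e : Sym2 VK) {f : Sym2 V1} (hf : f ∈ G1.edgeSet) :
    eDist (joinAt K G1 c x1) (Sym2.map Sum.inl e) (Sym2.map (glueVert c x1) f)
      = vDist K c e + vDist G1 x1 f + 1 := by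
  induction e, f using Sym2.inductionOn₂ with
  | _ a b y z =>
    have hyz : G1.Adj y z := hf
    rw [Sym2.map_pair_eq, Sym2.map_pair_eq,
      eDist_mk _ (by rw [← Sym2.map_pair_eq]; exact inl_pair_ne_glue_pair c x1 hyz.ne),
      joinAt_dist_inl_glue c x1 hK hG1, joinAt_dist_inl_glue c x1 hK hG1,
      joinAt_dist_inl_glue c x1 hK hG1, joinAt_dist_inl_glue c x1 hK hG1,
      vDist_mk, vDist_mk, SimpleGraph.dist_comm (G := K) (u := c) (v := a),
      SimpleGraph.dist_comm (G := K) (u := c) (v := b)]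
    omega

lemma sum_eDist_joinAt :
    (∑ e ∈ (joinAt K G1 c x1).edgeFinset, ∑ f ∈ (joinAt K G1 c x1).edgeFinset,
        eDist (joinAt K G1 c x1) e f)
      = (∑ e ∈ K.edgeFinset, ∑ f ∈ K.edgeFinset, eDist K e f)
        + (∑ e ∈ G1.edgeFinset, ∑ f ∈ G1.edgeFinset, eDist G1 e f)
        + 2 * ∑ e ∈ K.edgeFinset, ∑ f ∈ G1.edgeFinset,
            (vDist K c e + vDist G1 x1 f + 1) := by
  have hinj1 : ∀ x ∈ K.edgeFinset, ∀ y ∈ K.edgeFinset,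
      Sym2.map (Sum.inl : VK → VK ⊕ {w : V1 // w ≠ x1}) x
        = Sym2.map (Sum.inl : VK → VK ⊕ {w : V1 // w ≠ x1}) y → x = y :=
    fun x _ y _ h => Sym2.map.injective Sum.inl_injective h
  have hinj2 : ∀ x ∈ G1.edgeFinset, ∀ y ∈ G1.edgeFinset,
      Sym2.map (glueVert c x1) x = Sym2.map (glueVert c x1) y → x = y :=
    fun x _ y _ h => Sym2.map.injective (glueVert_injective c x1) h
  have hdisj := joinAt_edge_disjoint K G1 c x1
  rw [joinAt_edgeFinset, Finset.sum_union hdisj]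
  simp only [Finset.sum_union hdisj]
  rw [Finset.sum_add_distrib, Finset.sum_add_distrib]
  rw [Finset.sum_image hinj1, Finset.sum_image hinj2]
  simp only [Finset.sum_image hinj1, Finset.sum_image hinj2]
  have hAA : ∑ e ∈ K.edgeFinset, ∑ f ∈ K.edgeFinset,
      eDist (joinAt K G1 c x1) (Sym2.map Sum.inl e) (Sym2.map Sum.inl f)
      = ∑ e ∈ K.edgeFinset, ∑ f ∈ K.edgeFinset, eDist K e f :=
    Finset.sum_congr rfl fun e _ => Finset.sum_congr rfl fun f _ =>
      eDist_joinAt_inl_inl K G1 c x1 hK hG1 e f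
  have hBB : ∑ e ∈ G1.edgeFinset, ∑ f ∈ G1.edgeFinset,
      eDist (joinAt K G1 c x1) (Sym2.map (glueVert c x1) e) (Sym2.map (glueVert c x1) f)
      = ∑ e ∈ G1.edgeFinset, ∑ f ∈ G1.edgeFinset, eDist G1 e f :=
    Finset.sum_congr rfl fun e _ => Finset.sum_congr rfl fun f _ =>
      eDist_joinAt_glue_glue K G1 c x1 hK hG1 e f
  have hAB : ∑ e ∈ K.edgeFinset, ∑ f ∈ G1.edgeFinset,
      eDist (joinAt K G1 c x1) (Sym2.map Sum.inl e) (Sym2.map (glueVert c x1) f)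
      = ∑ e ∈ K.edgeFinset, ∑ f ∈ G1.edgeFinset, (vDist K c e + vDist G1 x1 f + 1) :=
    Finset.sum_congr rfl fun e _ => Finset.sum_congr rfl fun f hf =>
      eDist_joinAt_cross K G1 c x1 hK hG1 e (mem_edgeFinset.mp hf)
  have hBA : ∑ e ∈ G1.edgeFinset, ∑ f ∈ K.edgeFinset,
      eDist (joinAt K G1 c x1) (Sym2.map (glueVert c x1) e) (Sym2.map Sum.inl f)
      = ∑ e ∈ K.edgeFinset, ∑ f ∈ G1.edgeFinset, (vDist K c e + vDist G1 x1 f + 1) := by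
    rw [Finset.sum_comm]
    exact Finset.sum_congr rfl fun e _ => Finset.sum_congr rfl fun f hf => by
      rw [eDist_comm]
      exact eDist_joinAt_cross K G1 c x1 hK hG1 e (mem_edgeFinset.mp hf)
  rw [hAA, hBB, hAB, hBA]
  ring

end JoinSum

section Parity

variable {V : Type*} [Fintype V]

lemma even_sum_eDist (G : SimpleGraph V) :
    Even (∑ e ∈ G.edgeFinset, ∑ f ∈ G.edgeFinset, eDist G e f) := by
  rw [Nat.even_iff, ← Nat.dvd_iff_mod_eq_zero]
  rw [← ZMod.natCast_eq_zero_iff]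
  push_cast
  rw [← Finset.sum_product']
  refine Finset.sum_involution (fun p _ => (p.2, p.1)) ?_ ?_ ?_ ?_
  · intro p hp
    rw [eDist_comm G p.2 p.1]
    exact CharTwo.add_self_eq_zero _
  · intro p hp hne heq
    apply hne
    have h12 : p.1 = p.2 := by
      have := congrArg Prod.snd heq
      simpa using this
    rw [h12, eDist_self]
    simp
  · intro p hp
    simp only [Finset.mem_product] at hp ⊢
    exact ⟨hp.2, hp.1⟩
  · intro p hp
    rfl

end Parity

section TriSum

variable {V2 V3 : Type*} [Fintype V2] [Fintype V3]
  (G2 : SimpleGraph V2) (G3 : SimpleGraph V3) (x2 : V2) (x3 : V3)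

lemma triGlue_edgeFinset :
    (triGlue G2 G3 x2 x3).edgeFinset
      = (G2.edgeFinset.image (Sym2.map fun a => (some (Sum.inl a) : Option (V2 ⊕ V3)))
          ∪ G3.edgeFinset.image (Sym2.map fun b => (some (Sum.inr b) : Option (V2 ⊕ V3))))
        ∪ {s((none : Option (V2 ⊕ V3)), some (Sum.inl x2)),
           s((none : Option (V2 ⊕ V3)), some (Sum.inr x3)),
           s((some (Sum.inl x2) : Option (V2 ⊕ V3)), some (Sum.inr x3))} := by
  ext e
  simp only [Finset.mem_union, Finset.mem_image, Finset.mem_insert, Finset.mem_singleton,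
    mem_edgeFinset]
  constructor
  · intro he
    induction e using Sym2.ind with
    | _ p q =>
      rw [mem_edgeSet, triGlue_adj_iff] at he
      rcases he.2 with ⟨a, b, h, rfl, rfl⟩ | ⟨a, b, h, rfl, rfl⟩ |
        (⟨rfl, rfl⟩ | ⟨rfl, rfl⟩) | (⟨rfl, rfl⟩ | ⟨rfl, rfl⟩) | (⟨rfl, rfl⟩ | ⟨rfl, rfl⟩)
      · exact Or.inl (Or.inl ⟨s(a, b), h, (Sym2.map_pair_eq _ _ _).symm⟩)
      · exact Or.inl (Or.inr ⟨s(a, b), h, (Sym2.map_pair_eq _ _ _).symm⟩)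
      · exact Or.inr (Or.inl rfl)
      · exact Or.inr (Or.inl (Sym2.eq_swap))
      · exact Or.inr (Or.inr (Or.inl rfl))
      · exact Or.inr (Or.inr (Or.inl (Sym2.eq_swap)))
      · exact Or.inr (Or.inr (Or.inr rfl))
      · exact Or.inr (Or.inr (Or.inr (Sym2.eq_swap)))
  · rintro ((⟨e', he', rfl⟩ | ⟨e', he', rfl⟩) | (rfl | rfl | rfl))
    · revert he'
      induction e' using Sym2.ind with
      | _ p q =>
        intro he'
        rw [Sym2.map_pair_eq, mem_edgeSet]
        exact triGlue_adj_inl G2 G3 x2 x3 he'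
    · revert he'
      induction e' using Sym2.ind with
      | _ p q =>
        intro he'
        rw [Sym2.map_pair_eq, mem_edgeSet]
        exact triGlue_adj_inr G2 G3 x2 x3 he'
    · exact triGlue_adj_none_x2 G2 G3 x2 x3
    · exact triGlue_adj_none_x3 G2 G3 x2 x3
    · exact triGlue_adj_x2_x3 G2 G3 x2 x3

lemma tri_mem_img2_all {e : Sym2 (Option (V2 ⊕ V3))}
    (he : e ∈ G2.edgeFinset.image (Sym2.map fun a => (some (Sum.inl a) : Option (V2 ⊕ V3)))) :
    ∀ v ∈ e, ∃ a : V2, v = some (Sum.inl a) := by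
  obtain ⟨e', _, rfl⟩ := Finset.mem_image.mp he
  intro v hv
  obtain ⟨a, _, rfl⟩ := Sym2.mem_map.mp hv
  exact ⟨a, rfl⟩

lemma tri_mem_img3_all {e : Sym2 (Option (V2 ⊕ V3))}
    (he : e ∈ G3.edgeFinset.image (Sym2.map fun b => (some (Sum.inr b) : Option (V2 ⊕ V3)))) :
    ∀ v ∈ e, ∃ b : V3, v = some (Sum.inr b) := by
  obtain ⟨e', _, rfl⟩ := Finset.mem_image.mp he
  intro v hv
  obtain ⟨b, _, rfl⟩ := Sym2.mem_map.mp hv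
  exact ⟨b, rfl⟩

lemma tri_disj1 :
    Disjoint (G2.edgeFinset.image (Sym2.map fun a => (some (Sum.inl a) : Option (V2 ⊕ V3))))
      (G3.edgeFinset.image (Sym2.map fun b => (some (Sum.inr b) : Option (V2 ⊕ V3)))) := by
  rw [Finset.disjoint_left]
  intro e he1 he2
  revert he1 he2
  induction e using Sym2.ind with
  | _ p q =>
    intro he1 he2
    obtain ⟨a, ha⟩ := tri_mem_img2_all G2 he1 p (by simp)
    obtain ⟨b, hb⟩ := tri_mem_img3_all G3 he2 p (by simp)
    rw [ha] at hb
    simp at hb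

lemma tri_disj2 :
    Disjoint ((G2.edgeFinset.image (Sym2.map fun a => (some (Sum.inl a) : Option (V2 ⊕ V3))))
        ∪ G3.edgeFinset.image (Sym2.map fun b => (some (Sum.inr b) : Option (V2 ⊕ V3))))
      ({s((none : Option (V2 ⊕ V3)), some (Sum.inl x2)),
        s((none : Option (V2 ⊕ V3)), some (Sum.inr x3)),
        s((some (Sum.inl x2) : Option (V2 ⊕ V3)), some (Sum.inr x3))} :
        Finset (Sym2 (Option (V2 ⊕ V3)))) := by
  rw [Finset.disjoint_right]
  intro e he1 he2
  simp only [Finset.mem_insert, Finset.mem_singleton] at he1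
  rcases Finset.mem_union.mp he2 with h | h
  · have hall := tri_mem_img2_all G2 h
    rcases he1 with rfl | rfl | rfl
    · obtain ⟨a, ha⟩ := hall none (by simp); exact (by simp at ha)
    · obtain ⟨a, ha⟩ := hall none (by simp); exact (by simp at ha)
    · obtain ⟨a, ha⟩ := hall (some (Sum.inr x3)) (by simp); exact (by simp at ha)
  · have hall := tri_mem_img3_all G3 h
    rcases he1 with rfl | rfl | rfl
    · obtain ⟨a, ha⟩ := hall none (by simp); exact (by simp at ha)
    · obtain ⟨a, ha⟩ := hall none (by simp); exact (by simp at ha)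
    · obtain ⟨a, ha⟩ := hall (some (Sum.inl x2)) (by simp); exact (by simp at ha)

end TriSum

section TriSum2

variable {V2 V3 : Type*} [Fintype V2] [Fintype V3]
  (G2 : SimpleGraph V2) (G3 : SimpleGraph V3) (x2 : V2) (x3 : V3)
  (h2 : G2.Connected) (h3 : G3.Connected)
include h2 h3

lemma vT_none_2 (e : Sym2 V2) :
    vDist (triGlue G2 G3 x2 x3) none (Sym2.map (fun a => some (Sum.inl a)) e)
      = vDist G2 x2 e + 1 := by
  induction e using Sym2.ind with
  | _ a b =>
    rw [Sym2.map_pair_eq, vDist_mk, vDist_mk,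
      triGlue_dist_none_inl x2 x3 h2 h3, triGlue_dist_none_inl x2 x3 h2 h3]
    omega

lemma vT_none_3 (e : Sym2 V3) :
    vDist (triGlue G2 G3 x2 x3) none (Sym2.map (fun b => some (Sum.inr b)) e)
      = vDist G3 x3 e + 1 := by
  induction e using Sym2.ind with
  | _ a b =>
    rw [Sym2.map_pair_eq, vDist_mk, vDist_mk,
      triGlue_dist_none_inr x2 x3 h2 h3, triGlue_dist_none_inr x2 x3 h2 h3]
    omega

lemma vT_u2_2 (u2 : V2) (e : Sym2 V2) :
    vDist (triGlue G2 G3 x2 x3) (some (Sum.inl u2)) (Sym2.map (fun a => some (Sum.inl a)) e)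
      = vDist G2 u2 e := by
  induction e using Sym2.ind with
  | _ a b =>
    rw [Sym2.map_pair_eq, vDist_mk, vDist_mk,
      triGlue_dist_inl_inl x2 x3 h2 h3, triGlue_dist_inl_inl x2 x3 h2 h3]

lemma vT_u2_3 (u2 : V2) (e : Sym2 V3) :
    vDist (triGlue G2 G3 x2 x3) (some (Sum.inl u2)) (Sym2.map (fun b => some (Sum.inr b)) e)
      = vDist G3 x3 e + (G2.dist u2 x2 + 1) := by
  induction e using Sym2.ind with
  | _ a b =>
    rw [Sym2.map_pair_eq, vDist_mk, vDist_mk,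
      triGlue_dist_inl_inr x2 x3 h2 h3, triGlue_dist_inl_inr x2 x3 h2 h3]
    omega

lemma sum_vDist_triGlue_none :
    ∑ e ∈ (triGlue G2 G3 x2 x3).edgeFinset, vDist (triGlue G2 G3 x2 x3) none e
      = ((∑ e ∈ G2.edgeFinset, (vDist G2 x2 e + 1))
          + ∑ e ∈ G3.edgeFinset, (vDist G3 x3 e + 1)) + 1 := by
  rw [triGlue_edgeFinset, Finset.sum_union (tri_disj2 G2 G3 x2 x3),
    Finset.sum_union (tri_disj1 G2 G3)]
  have hi2 : ∀ x ∈ G2.edgeFinset, ∀ y ∈ G2.edgeFinset,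
      Sym2.map (fun a => (some (Sum.inl a) : Option (V2 ⊕ V3))) x
        = Sym2.map (fun a => (some (Sum.inl a) : Option (V2 ⊕ V3))) y → x = y :=
    fun x _ y _ h => Sym2.map.injective (fun a b hab => by simpa using hab) h
  have hi3 : ∀ x ∈ G3.edgeFinset, ∀ y ∈ G3.edgeFinset,
      Sym2.map (fun b => (some (Sum.inr b) : Option (V2 ⊕ V3))) x
        = Sym2.map (fun b => (some (Sum.inr b) : Option (V2 ⊕ V3))) y → x = y :=
    fun x _ y _ h => Sym2.map.injective (fun a b hab => by simpa using hab) h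
  rw [Finset.sum_image hi2, Finset.sum_image hi3]
  have e12 : s((none : Option (V2 ⊕ V3)), some (Sum.inl x2))
      ≠ s((none : Option (V2 ⊕ V3)), some (Sum.inr x3)) := by
    simp [Sym2.eq_iff]
  have e13 : s((none : Option (V2 ⊕ V3)), some (Sum.inl x2))
      ≠ s((some (Sum.inl x2) : Option (V2 ⊕ V3)), some (Sum.inr x3)) := by
    simp [Sym2.eq_iff]
  have e23 : s((none : Option (V2 ⊕ V3)), some (Sum.inr x3))
      ≠ s((some (Sum.inl x2) : Option (V2 ⊕ V3)), some (Sum.inr x3)) := by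
    simp [Sym2.eq_iff]
  rw [Finset.sum_insert (by simp [e12, e13]), Finset.sum_insert (by simp [e23]),
    Finset.sum_singleton]
  have t1 : vDist (triGlue G2 G3 x2 x3) none s((none : Option (V2 ⊕ V3)), some (Sum.inl x2))
      = 0 := by
    rw [vDist_mk, SimpleGraph.dist_self]
    omega
  have t2 : vDist (triGlue G2 G3 x2 x3) none s((none : Option (V2 ⊕ V3)), some (Sum.inr x3))
      = 0 := by
    rw [vDist_mk, SimpleGraph.dist_self]
    omega
  have t3 : vDist (triGlue G2 G3 x2 x3) none
      s((some (Sum.inl x2) : Option (V2 ⊕ V3)), some (Sum.inr x3)) = 1 := by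
    rw [vDist_mk, triGlue_dist_none_inl x2 x3 h2 h3, triGlue_dist_none_inr x2 x3 h2 h3,
      SimpleGraph.dist_self, SimpleGraph.dist_self]
    omega
  rw [t1, t2, t3]
  rw [Finset.sum_congr rfl fun e _ => vT_none_2 G2 G3 x2 x3 h2 h3 e,
    Finset.sum_congr rfl fun e _ => vT_none_3 G2 G3 x2 x3 h2 h3 e]
  omega

lemma sum_vDist_triGlue_u2 (u2 : V2) :
    ∑ e ∈ (triGlue G2 G3 x2 x3).edgeFinset, vDist (triGlue G2 G3 x2 x3) (some (Sum.inl u2)) e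
      = ((∑ e ∈ G2.edgeFinset, vDist G2 u2 e)
          + ∑ e ∈ G3.edgeFinset, (vDist G3 x3 e + (G2.dist u2 x2 + 1)))
        + (3 * G2.dist u2 x2 + 1) := by
  rw [triGlue_edgeFinset, Finset.sum_union (tri_disj2 G2 G3 x2 x3),
    Finset.sum_union (tri_disj1 G2 G3)]
  have hi2 : ∀ x ∈ G2.edgeFinset, ∀ y ∈ G2.edgeFinset,
      Sym2.map (fun a => (some (Sum.inl a) : Option (V2 ⊕ V3))) x
        = Sym2.map (fun a => (some (Sum.inl a) : Option (V2 ⊕ V3))) y → x = y :=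
    fun x _ y _ h => Sym2.map.injective (fun a b hab => by simpa using hab) h
  have hi3 : ∀ x ∈ G3.edgeFinset, ∀ y ∈ G3.edgeFinset,
      Sym2.map (fun b => (some (Sum.inr b) : Option (V2 ⊕ V3))) x
        = Sym2.map (fun b => (some (Sum.inr b) : Option (V2 ⊕ V3))) y → x = y :=
    fun x _ y _ h => Sym2.map.injective (fun a b hab => by simpa using hab) h
  rw [Finset.sum_image hi2, Finset.sum_image hi3]
  have e12 : s((none : Option (V2 ⊕ V3)), some (Sum.inl x2))
      ≠ s((none : Option (V2 ⊕ V3)), some (Sum.inr x3)) := by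
    simp [Sym2.eq_iff]
  have e13 : s((none : Option (V2 ⊕ V3)), some (Sum.inl x2))
      ≠ s((some (Sum.inl x2) : Option (V2 ⊕ V3)), some (Sum.inr x3)) := by
    simp [Sym2.eq_iff]
  have e23 : s((none : Option (V2 ⊕ V3)), some (Sum.inr x3))
      ≠ s((some (Sum.inl x2) : Option (V2 ⊕ V3)), some (Sum.inr x3)) := by
    simp [Sym2.eq_iff]
  rw [Finset.sum_insert (by simp [e12, e13]), Finset.sum_insert (by simp [e23]),
    Finset.sum_singleton]
  have hdun : (triGlue G2 G3 x2 x3).dist (some (Sum.inl u2)) none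
      = G2.dist u2 x2 + 1 := by
    rw [SimpleGraph.dist_comm, triGlue_dist_none_inl x2 x3 h2 h3,
      SimpleGraph.dist_comm (G := G2)]
  have hdux2 : (triGlue G2 G3 x2 x3).dist (some (Sum.inl u2)) (some (Sum.inl x2))
      = G2.dist u2 x2 := triGlue_dist_inl_inl x2 x3 h2 h3 u2 x2
  have t1 : vDist (triGlue G2 G3 x2 x3) (some (Sum.inl u2))
      s((none : Option (V2 ⊕ V3)), some (Sum.inl x2)) = G2.dist u2 x2 := by
    rw [vDist_mk, hdun, hdux2]
    omega
  have t2 : vDist (triGlue G2 G3 x2 x3) (some (Sum.inl u2))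
      s((none : Option (V2 ⊕ V3)), some (Sum.inr x3)) = G2.dist u2 x2 + 1 := by
    rw [vDist_mk, hdun, triGlue_dist_inl_inr x2 x3 h2 h3, SimpleGraph.dist_self]
    omega
  have t3 : vDist (triGlue G2 G3 x2 x3) (some (Sum.inl u2))
      s((some (Sum.inl x2) : Option (V2 ⊕ V3)), some (Sum.inr x3)) = G2.dist u2 x2 := by
    rw [vDist_mk, hdux2, triGlue_dist_inl_inr x2 x3 h2 h3, SimpleGraph.dist_self]
    omega
  rw [t1, t2, t3]
  rw [Finset.sum_congr rfl fun e _ => vT_u2_2 G2 G3 x2 x3 h2 h3 u2 e,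
    Finset.sum_congr rfl fun e _ => vT_u2_3 G2 G3 x2 x3 h2 h3 u2 e]
  have heta : G2.edgeFinset.sum (vDist G2 u2) = ∑ e ∈ G2.edgeFinset, vDist G2 u2 e := rfl
  omega

end TriSum2

section Core

variable {V2 : Type*} [Fintype V2] (G2 : SimpleGraph V2) (x2 u2 : V2)

lemma exists_parent (h2 : G2.Connected) (w : V2) (hw : G2.dist x2 w ≠ 0) :
    ∃ p, G2.Adj p w ∧ G2.dist x2 p + 1 = G2.dist x2 w := by
  have key : ∀ (w' : V2) (r : G2.Walk w' x2), r.length = G2.dist x2 w' →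
      G2.dist x2 w' ≠ 0 → ∃ p, G2.Adj p w' ∧ G2.dist x2 p + 1 = G2.dist x2 w' := by
    intro w' r
    cases r with
    | nil =>
      intro h1 hne
      rw [SimpleGraph.dist_self] at hne
      exact absurd rfl hne
    | @cons _ b _ h r' =>
      intro h1 hne
      refine ⟨b, h.symm, ?_⟩
      have hle : G2.dist x2 b ≤ r'.length := by
        have hh := SimpleGraph.dist_le r'.reverse
        rwa [SimpleGraph.Walk.length_reverse] at hh
      have htr : G2.dist x2 w' ≤ G2.dist x2 b + 1 := by
        have ht := h2.dist_triangle (u := x2) (v := b) (w := w')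
        have hbw : G2.dist b w' ≤ 1 := by
          have hh := SimpleGraph.dist_le (SimpleGraph.Walk.cons h.symm SimpleGraph.Walk.nil)
          simpa using hh
        omega
      simp only [SimpleGraph.Walk.length_cons] at h1
      omega
  obtain ⟨q, hq⟩ := (h2 x2 w).exists_walk_length_eq_dist
  exact key w q.reverse (by rw [SimpleGraph.Walk.length_reverse]; exact hq) hw

lemma vDist_zero_mem (h2 : G2.Connected) (v : V2) (f : Sym2 V2) :
    vDist G2 v f = 0 ↔ v ∈ f := by
  induction f using Sym2.ind with
  | _ a b =>
    rw [vDist_mk, Sym2.mem_iff]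
    constructor
    · intro h
      rcases Nat.min_eq_zero_iff.mp h with h | h
      · exact Or.inl (h2.dist_eq_zero_iff.mp h)
      · exact Or.inr (h2.dist_eq_zero_iff.mp h)
    · rintro (rfl | rfl)
      · rw [SimpleGraph.dist_self]; omega
      · rw [SimpleGraph.dist_self]; omega

lemma core_ineq (h2 : G2.Connected) (hfar : ∀ w, G2.dist x2 w ≤ G2.dist x2 u2)
    (hd : 1 ≤ G2.dist x2 u2) :
    ∑ f ∈ G2.edgeFinset, (vDist G2 x2 f + 1)
      ≤ (∑ f ∈ G2.edgeFinset, vDist G2 u2 f)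
        + G2.edgeFinset.card * G2.dist x2 u2 := by
  classical
  set d := G2.dist x2 u2 with hdd
  have vDist_le_d : ∀ g : Sym2 V2, vDist G2 x2 g ≤ d := by
    intro g
    induction g using Sym2.ind with
    | _ a b =>
      rw [vDist_mk]
      have := hfar a
      omega
  set pfun : V2 → V2 := fun w =>
    if h : G2.dist x2 w ≠ 0 then (exists_parent G2 x2 h2 w h).choose else w with hpfdef
  have hpfun : ∀ w, G2.dist x2 w ≠ 0 →
      G2.Adj (pfun w) w ∧ G2.dist x2 (pfun w) + 1 = G2.dist x2 w := by
    intro w h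
    simp only [hpfdef, dif_pos h]
    exact (exists_parent G2 x2 h2 w h).choose_spec
  set wfun : Sym2 V2 → V2 := fun f => if h : u2 ∈ f then (Sym2.Mem.other' h) else u2 with hwfdef
  have hwfun : ∀ (f : Sym2 V2) (h : u2 ∈ f), s(u2, wfun f) = f := by
    intro f h
    simp only [hwfdef, dif_pos h]
    exact Sym2.other_spec' h
  set P : Sym2 V2 → Sym2 V2 := fun f => s(wfun f, pfun (wfun f)) with hPdef
  set Bad := G2.edgeFinset.filter
    (fun f => vDist G2 u2 f = 0 ∧ vDist G2 x2 f = d) with hBaddef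
  have hBadfacts : ∀ f ∈ Bad, G2.Adj u2 (wfun f) ∧ G2.dist x2 (wfun f) = d
      ∧ s(u2, wfun f) = f := by
    intro f hf
    obtain ⟨hfe, hb0, had⟩ := Finset.mem_filter.mp hf
    have hu2f : u2 ∈ f := (vDist_zero_mem G2 h2 u2 f).mp hb0
    have hsp := hwfun f hu2f
    have hadj : G2.Adj u2 (wfun f) := by
      rw [← mem_edgeSet, hsp]
      exact mem_edgeFinset.mp hfe
    refine ⟨hadj, ?_, hsp⟩
    have hvd : vDist G2 x2 s(u2, wfun f) = d := by rw [hsp]; exact had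
    rw [vDist_mk] at hvd
    have h1 := hfar (wfun f)
    omega
  have hPfacts : ∀ f ∈ Bad, P f ∈ G2.edgeFinset ∧ vDist G2 x2 (P f) + 1 = d
      ∧ 1 ≤ vDist G2 u2 (P f) ∧ G2.dist x2 (pfun (wfun f)) + 1 = d := by
    intro f hf
    obtain ⟨hadj, hwd, hsp⟩ := hBadfacts f hf
    have hw0 : G2.dist x2 (wfun f) ≠ 0 := by omega
    obtain ⟨hpadj, hpd⟩ := hpfun (wfun f) hw0
    rw [hwd] at hpd
    have hPmem : P f ∈ G2.edgeFinset := by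
      rw [hPdef]
      exact mem_edgeFinset.mpr hpadj.symm
    have hPx2 : vDist G2 x2 (P f) + 1 = d := by
      rw [hPdef]
      simp only []
      rw [vDist_mk]
      omega
    have hPu2 : 1 ≤ vDist G2 u2 (P f) := by
      rcases Nat.eq_zero_or_pos (vDist G2 u2 (P f)) with h0 | h1
      · exfalso
        have hmem := (vDist_zero_mem G2 h2 u2 (P f)).mp h0
        rw [hPdef] at hmem
        simp only [Sym2.mem_iff] at hmem
        rcases hmem with h | h
        · exact hadj.ne h
        · rw [← h] at hpd
          omega
      · exact h1
    exact ⟨hPmem, hPx2, hPu2, hpd⟩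
  have hinj : Set.InjOn P Bad := by
    intro f hf g hg heq
    obtain ⟨hadjf, hwdf, hspf⟩ := hBadfacts f hf
    obtain ⟨hadjg, hwdg, hspg⟩ := hBadfacts g hg
    obtain ⟨-, -, -, hpdf⟩ := hPfacts f hf
    obtain ⟨-, -, -, hpdg⟩ := hPfacts g hg
    rw [hPdef] at heq
    simp only [Sym2.eq_iff] at heq
    rcases heq with ⟨hww, -⟩ | ⟨hwp, hpw⟩
    · rw [← hspf, ← hspg, hww]
    · rw [hwp] at hwdf
      omega
  set Pim := Bad.image P with hPimdef
  have hcardPim : Pim.card = Bad.card := Finset.card_image_of_injOn hinj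
  set NB := G2.edgeFinset.filter
    (fun f => ¬(vDist G2 u2 f = 0 ∧ vDist G2 x2 f = d)) with hNBdef
  have hPimNB : Pim ⊆ NB := by
    intro g hg
    obtain ⟨f, hf, rfl⟩ := Finset.mem_image.mp hg
    obtain ⟨hPmem, hPx2, hPu2, -⟩ := hPfacts f hf
    rw [hNBdef]
    refine Finset.mem_filter.mpr ⟨hPmem, ?_⟩
    intro hcon
    omega
  have hsplitE : ∀ F : Sym2 V2 → ℕ,
      ∑ f ∈ G2.edgeFinset, F f = ∑ f ∈ Bad, F f + ∑ f ∈ NB, F f := by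
    intro F
    rw [hBaddef, hNBdef]
    exact (Finset.sum_filter_add_sum_filter_not _ _ _).symm
  have hcardE : Bad.card + NB.card = G2.edgeFinset.card := by
    rw [hBaddef, hNBdef]
    exact Finset.card_filter_add_card_filter_not _
  have hBadL : ∑ f ∈ Bad, (vDist G2 x2 f + 1) = Bad.card * (d + 1) := by
    have hc : ∀ f ∈ Bad, vDist G2 x2 f + 1 = d + 1 := by
      intro f hf
      obtain ⟨-, -, had⟩ := Finset.mem_filter.mp hf
      omega
    rw [Finset.sum_congr rfl hc, Finset.sum_const, smul_eq_mul]
  have hBadR : ∑ f ∈ Bad, vDist G2 u2 f = 0 := by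
    refine Finset.sum_eq_zero fun f hf => ?_
    exact (Finset.mem_filter.mp hf).2.1
  have hNBsplit : ∀ F : Sym2 V2 → ℕ,
      ∑ f ∈ NB, F f = ∑ f ∈ NB \ Pim, F f + ∑ f ∈ Pim, F f :=
    fun F => (Finset.sum_sdiff hPimNB).symm
  have hNBrest : ∑ f ∈ NB \ Pim, (vDist G2 x2 f + 1)
      ≤ ∑ f ∈ NB \ Pim, (vDist G2 u2 f + d) := by
    refine Finset.sum_le_sum fun f hf => ?_
    have hfNB : f ∈ NB := (Finset.mem_sdiff.mp hf).1
    have hnot := (Finset.mem_filter.mp hfNB).2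
    have hle := vDist_le_d f
    by_cases h0 : vDist G2 u2 f = 0
    · have : vDist G2 x2 f ≠ d := fun hc => hnot ⟨h0, hc⟩
      omega
    · omega
  have hPimBound : ∑ f ∈ Pim, (vDist G2 x2 f + 1) + Pim.card
      ≤ ∑ f ∈ Pim, (vDist G2 u2 f + d) := by
    have h1 : ∑ f ∈ Pim, (vDist G2 x2 f + 1) + Pim.card
        = ∑ f ∈ Pim, (vDist G2 x2 f + 1 + 1) := by
      rw [eq_comm, Finset.sum_add_distrib, Finset.sum_const, smul_eq_mul, mul_one]
    rw [h1]
    refine Finset.sum_le_sum fun g hg => ?_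
    obtain ⟨f, hf, rfl⟩ := Finset.mem_image.mp hg
    obtain ⟨-, hPx2, hPu2, -⟩ := hPfacts f hf
    omega
  rw [hsplitE (fun f => vDist G2 x2 f + 1), hsplitE (fun f => vDist G2 u2 f)]
  rw [hNBsplit (fun f => vDist G2 x2 f + 1), hNBsplit (fun f => vDist G2 u2 f)]
  have hfin : ∑ f ∈ NB \ Pim, (vDist G2 u2 f + d)
      = ∑ f ∈ NB \ Pim, vDist G2 u2 f + (NB \ Pim).card * d := by
    rw [Finset.sum_add_distrib, Finset.sum_const, smul_eq_mul]
  have hfin2 : ∑ f ∈ Pim, (vDist G2 u2 f + d)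
      = ∑ f ∈ Pim, vDist G2 u2 f + Pim.card * d := by
    rw [Finset.sum_add_distrib, Finset.sum_const, smul_eq_mul]
  have hcardNB : (NB \ Pim).card + Pim.card = NB.card := by
    rw [Finset.card_sdiff_of_subset hPimNB]
    have := Finset.card_le_card hPimNB
    omega
  -- arithmetic assembly
  have hmul : (Bad.card + NB.card) * d = G2.edgeFinset.card * d := by rw [hcardE]
  have hexp : Bad.card * (d + 1) = Bad.card * d + Bad.card := by ring
  have hmul2 : (NB \ Pim).card * d + Pim.card * d = NB.card * d := by
    rw [← Nat.add_mul, hcardNB]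
  have hmul3 : Bad.card * d + NB.card * d = G2.edgeFinset.card * d := by
    rw [← Nat.add_mul, hcardE]
  omega

end Core

section SLt

variable {V2 V3 : Type*} [Fintype V2] [Fintype V3]
  (G2 : SimpleGraph V2) (G3 : SimpleGraph V3) (x2 : V2) (x3 : V3) (u2 : V2)

lemma S_lt (h2 : G2.Connected) (h3 : G3.Connected)
    (hfar : ∀ w, G2.dist x2 w ≤ G2.dist x2 u2) (hd : 1 ≤ G2.dist x2 u2)
    (hm23 : G2.edgeFinset.card ≤ G3.edgeFinset.card) :
    ∑ e ∈ (triGlue G2 G3 x2 x3).edgeFinset, vDist (triGlue G2 G3 x2 x3) none e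
      < ∑ e ∈ (triGlue G2 G3 x2 x3).edgeFinset,
          vDist (triGlue G2 G3 x2 x3) (some (Sum.inl u2)) e := by
  rw [sum_vDist_triGlue_none G2 G3 x2 x3 h2 h3, sum_vDist_triGlue_u2 G2 G3 x2 x3 h2 h3 u2]
  have hdc : G2.dist u2 x2 = G2.dist x2 u2 := SimpleGraph.dist_comm
  rw [hdc]
  have hsum3 : ∑ e ∈ G3.edgeFinset, (vDist G3 x3 e + (G2.dist x2 u2 + 1))
      = (∑ e ∈ G3.edgeFinset, (vDist G3 x3 e + 1))
        + G3.edgeFinset.card * G2.dist x2 u2 := by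
    have hc : ∀ e ∈ G3.edgeFinset, vDist G3 x3 e + (G2.dist x2 u2 + 1)
        = (vDist G3 x3 e + 1) + G2.dist x2 u2 := by
      intro e _
      omega
    rw [Finset.sum_congr rfl hc, Finset.sum_add_distrib, Finset.sum_const, smul_eq_mul]
  have hcore := core_ineq G2 x2 u2 h2 hfar hd
  have hmono : G2.edgeFinset.card * G2.dist x2 u2 ≤ G3.edgeFinset.card * G2.dist x2 u2 :=
    Nat.mul_le_mul_right _ hm23
  omega

end SLt

end EWaux

theorem stmt9 {V1 V2 V3 : Type*} [Fintype V1] [Fintype V2] [Fintype V3]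
    (G1 : SimpleGraph V1) (G2 : SimpleGraph V2) (G3 : SimpleGraph V3)
    (h1 : G1.Connected) (h2 : G2.Connected) (h3 : G3.Connected)
    (hn1 : 2 ≤ Fintype.card V1) (hn2 : 2 ≤ Fintype.card V2) (hn3 : 2 ≤ Fintype.card V3)
    (hm1 : 1 ≤ G1.edgeFinset.card) (hm2 : 1 ≤ G2.edgeFinset.card)
    (hm3 : 1 ≤ G3.edgeFinset.card)
    (x1 : V1) (x2 : V2) (x3 : V3) (u2 : V2)
    (hfar : ∀ w : V2, G2.dist x2 w ≤ G2.dist x2 u2)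
    (hm23 : G2.edgeFinset.card ≤ G3.edgeFinset.card) :
    edgeWiener (joinAt (triGlue G2 G3 x2 x3) G1 none x1)
      < edgeWiener (joinAt (triGlue G2 G3 x2 x3) G1 (some (Sum.inl u2)) x1) := by
  classical
  have hT : (triGlue G2 G3 x2 x3).Connected := EWaux.triGlue_connected x2 x3 h2 h3
  have hd : 1 ≤ G2.dist x2 u2 := by
    obtain ⟨w, hw⟩ := Fintype.exists_ne_of_one_lt_card (by omega) x2
    have hpos := (h2 x2 w).pos_dist_of_ne hw.symm
    have := hfar w
    omega
  unfold edgeWiener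
  apply Nat.div_lt_div_of_lt_of_dvd
  · exact (EWaux.even_sum_eDist _).two_dvd
  rw [EWaux.sum_eDist_joinAt (triGlue G2 G3 x2 x3) G1 none x1 hT h1,
    EWaux.sum_eDist_joinAt (triGlue G2 G3 x2 x3) G1 (some (Sum.inl u2)) x1 hT h1]
  have hS := EWaux.S_lt G2 G3 x2 x3 u2 h2 h3 hfar hd hm23
  have hcross : ∀ c : Option (V2 ⊕ V3),
      ∑ e ∈ (triGlue G2 G3 x2 x3).edgeFinset, ∑ f ∈ G1.edgeFinset,
        (vDist (triGlue G2 G3 x2 x3) c e + vDist G1 x1 f + 1)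
      = G1.edgeFinset.card
          * (∑ e ∈ (triGlue G2 G3 x2 x3).edgeFinset, vDist (triGlue G2 G3 x2 x3) c e)
        + (triGlue G2 G3 x2 x3).edgeFinset.card
          * (∑ f ∈ G1.edgeFinset, (vDist G1 x1 f + 1)) := by
    intro c
    have inner : ∀ e, ∑ f ∈ G1.edgeFinset,
        (vDist (triGlue G2 G3 x2 x3) c e + vDist G1 x1 f + 1)
        = G1.edgeFinset.card * vDist (triGlue G2 G3 x2 x3) c e
          + ∑ f ∈ G1.edgeFinset, (vDist G1 x1 f + 1) := by
      intro e
      have hc : ∀ f ∈ G1.edgeFinset, vDist (triGlue G2 G3 x2 x3) c e + vDist G1 x1 f + 1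
          = vDist (triGlue G2 G3 x2 x3) c e + (vDist G1 x1 f + 1) := by
        intro f _
        omega
      rw [Finset.sum_congr rfl hc, Finset.sum_add_distrib, Finset.sum_const, smul_eq_mul]
    rw [Finset.sum_congr rfl (fun e _ => inner e), Finset.sum_add_distrib,
      ← Finset.mul_sum, Finset.sum_const, smul_eq_mul]
  rw [hcross none, hcross (some (Sum.inl u2))]
  have hmul : G1.edgeFinset.card
        * (∑ e ∈ (triGlue G2 G3 x2 x3).edgeFinset, vDist (triGlue G2 G3 x2 x3) none e)
      < G1.edgeFinset.card
        * (∑ e ∈ (triGlue G2 G3 x2 x3).edgeFinset,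
            vDist (triGlue G2 G3 x2 x3) (some (Sum.inl u2)) e) :=
    Nat.mul_lt_mul_of_le_of_lt (le_refl _) hS hm1
  omega
end
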